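/- arXiv:2101.09036 — 10 statements merged into one kernel-verified Lean document; each statement's English description precedes it below -/
import Mathlib

section
/- During the proof of Noether's theorem for dissipative systems: for any vector field X on Q, the identity ξ_{L,β}(X^v(L)) = X^c(L) − β(X^c) holds. -/
/- Formalization in the smooth vector-space model: Q is modelled by a real
normed space `V`, so `TQ = V × V` with coordinates `(q, q̇)`.  Vector fields,
1-forms, exterior derivatives, Lie derivatives and brackets are expressed via
the Fréchet derivative `fderiv`. -/

noncomputable section

variable {V : Type*} [NormedAddCommGroup V] [NormedSpace ℝ V]

/-- Exterior derivative of a 1-form on a normed space: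
`dα(x)(a,b) = (Dα(x)a)(b) − (Dα(x)b)(a)`. -/
def extDerivOne {E : Type*} [NormedAddCommGroup E] [NormedSpace ℝ E]
    (α : E → E →L[ℝ] ℝ) (x : E) (a b : E) : ℝ :=
  fderiv ℝ α x a b - fderiv ℝ α x b a

/-- Lie derivative of a 1-form along a vector field:
`(ℒ_X α)(x) = Dα(x)(X x) + α(x) ∘ DX(x)`. -/
def lieDerivOne {E : Type*} [NormedAddCommGroup E] [NormedSpace ℝ E]
    (X : E → E) (α : E → E →L[ℝ] ℝ) (x : E) : E →L[ℝ] ℝ :=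
  fderiv ℝ α x (X x) + (α x).comp (fderiv ℝ X x)

/-- Lie bracket of vector fields: `[X,Y](x) = DY(x)(X x) − DX(x)(Y x)`. -/
def vbracket {E : Type*} [NormedAddCommGroup E] [NormedSpace ℝ E]
    (X Y : E → E) (x : E) : E :=
  fderiv ℝ Y x (X x) - fderiv ℝ X x (Y x)

/-- The vertical endomorphism `S` of `TQ = V × V`: `S(u, w) = (0, u)`. -/
def vertEndo (V : Type*) [NormedAddCommGroup V] [NormedSpace ℝ V] :
    (V × V) →L[ℝ] V × V :=
  (ContinuousLinearMap.inr ℝ V V).comp (ContinuousLinearMap.fst ℝ V V)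

/-- Poincaré–Cartan 1-form `α_L = S*(dL)`. -/
def alphaL (L : V × V → ℝ) (x : V × V) : (V × V) →L[ℝ] ℝ :=
  (fderiv ℝ L x).comp (vertEndo V)

/-- Poincaré–Cartan 2-form `ω_L = −dα_L`. -/
def omegaL (L : V × V → ℝ) (x : V × V) (a b : V × V) : ℝ :=
  -extDerivOne (alphaL L) x a b

/-- Energy `E_L = Δ(L) − L`, where `Δ(q, q̇) = (0, q̇)` is the Liouville
vector field. -/
def energyL (L : V × V → ℝ) (x : V × V) : ℝ :=
  fderiv ℝ L x (0, x.2) - L x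

/-- Vertical lift `X^v` of a vector field on `Q`. -/
def vlift (X : V → V) : V × V → V × V := fun x => (0, X x.1)

/-- Complete lift `X^c` of a vector field on `Q`. -/
def clift (X : V → V) : V × V → V × V := fun x => (X x.1, fderiv ℝ X x.1 x.2)

/-- A 1-form on `TQ` is semibasic if it annihilates all vertical vectors. -/
def SemibasicTQ (β : V × V → (V × V) →L[ℝ] ℝ) : Prop :=
  ∀ (x : V × V) (w : V), β x (0, w) = 0

/-- `ξ` is the forced Euler–Lagrange vector field of `(L, β)`:
`ι_ξ ω_L = dE_L + β`. -/
def IsForcedEL (L : V × V → ℝ) (β : V × V → (V × V) →L[ℝ] ℝ)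
    (ξ : V × V → V × V) : Prop :=
  ∀ (x : V × V) (b : V × V),
    omegaL L x (ξ x) b = fderiv ℝ (energyL L) x b + β x b

/-- Regularity of the Lagrangian, expressed by nondegeneracy of `ω_L`. -/
def RegularLag (L : V × V → ℝ) : Prop :=
  ∀ (x : V × V) (a : V × V), (∀ b, omegaL L x a b = 0) → a = 0

/-- Key identity in the proof of Noether's theorem:
`ξ_{L,β}(X^v(L)) = X^c(L) − β(X^c)` for any vector field `X` on `Q`. -/
theorem noether_key_identity
    (L : V × V → ℝ) (hL : ContDiff ℝ (⊤ : ℕ∞) L) (hreg : RegularLag L)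
    (β : V × V → (V × V) →L[ℝ] ℝ) (hβ : ContDiff ℝ (⊤ : ℕ∞) β) (hsb : SemibasicTQ β)
    (ξ : V × V → V × V) (hξ : IsForcedEL L β ξ) (hξs : ContDiff ℝ (⊤ : ℕ∞) ξ)
    (X : V → V) (hX : ContDiff ℝ (⊤ : ℕ∞) X) :
    ∀ x, fderiv ℝ (fun y => fderiv ℝ L y (vlift X y)) x (ξ x) =
      fderiv ℝ L x (clift X x) - β x (clift X x) := by
  intro x
  have hL1 : Differentiable ℝ L := hL.differentiable (by simp)
  have hDc : ContDiff ℝ (⊤ : ℕ∞) (fderiv ℝ L) := hL.fderiv_right (by simp)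
  set D := fderiv ℝ L with hDdef
  set D2 := fderiv ℝ D x with hD2def
  have hD2 : HasFDerivAt D D2 x := (hDc.differentiable (by simp) x).hasFDerivAt
  have hsymm : ∀ a b, D2 a b = D2 b a :=
    second_derivative_symmetric (fun y => (hL1 y).hasFDerivAt) hD2
  set q := x.1
  set v := x.2
  -- vertical endomorphism acts as (u,w) ↦ (0,u)
  have hS : ∀ c : V × V, vertEndo V c = ((0 : V), c.1) := by
    intro c
    simp [vertEndo]
  -- derivative of alphaL at x
  have halpha : HasFDerivAt (alphaL L)
      ((ContinuousLinearMap.compL ℝ (V × V) (V × V) ℝ (D x)).comp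
        (0 : (V × V) →L[ℝ] (V × V) →L[ℝ] (V × V)) +
       (((ContinuousLinearMap.compL ℝ (V × V) (V × V) ℝ).flip (vertEndo V)).comp D2)) x := by
    exact hD2.clm_comp (hasFDerivAt_const (vertEndo V) x)
  have hω : ∀ a b : V × V, omegaL L x a b = D2 b (0, a.1) - D2 a (0, b.1) := by
    intro a b
    have := halpha.fderiv
    simp only [omegaL, extDerivOne, this]
    simp [hS]
  -- derivative of energy at x
  have hU : HasFDerivAt (fun y : V × V => ((0 : V), y.2))
      ((0 : (V × V) →L[ℝ] V).prod (ContinuousLinearMap.snd ℝ V V)) x :=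
    HasFDerivAt.prodMk (hasFDerivAt_const (0 : V) x) (hasFDerivAt_snd)
  have hE : ∀ b : V × V, fderiv ℝ (energyL L) x b = D2 b (0, v) + D x (0, b.2) - D x b := by
    intro b
    have h1 : HasFDerivAt (energyL L)
        ((D x).comp ((0 : (V × V) →L[ℝ] V).prod (ContinuousLinearMap.snd ℝ V V)) +
          D2.flip ((0 : V), v) - D x) x := by
      exact (hD2.clm_apply hU).sub (hL1 x).hasFDerivAt
    rw [h1.fderiv]
    simp only [ContinuousLinearMap.sub_apply, ContinuousLinearMap.add_apply,
      ContinuousLinearMap.coe_comp', Function.comp_apply, ContinuousLinearMap.prod_apply,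
      ContinuousLinearMap.zero_apply, ContinuousLinearMap.flip_apply,
      ContinuousLinearMap.coe_snd']
    ring
  have hEL : ∀ b : V × V, D2 b (0, (ξ x).1) - D2 (ξ x) (0, b.1)
      = D2 b (0, v) + D x (0, b.2) - D x b + β x b := by
    intro b
    rw [← hω, ← hE]
    exact hξ x b
  -- second-order condition: (ξ x).1 = v
  have h1 : ∀ d : V, D2 ((0 : V), d) ((0 : V), (ξ x).1 - v) = 0 := by
    intro d
    have := hEL ((0 : V), d)
    have hz : ((0 : V), (0:V)) = (0 : V × V) := rfl
    simp only [hsb x d] at this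
    have h2 : D2 ((0:V), d) ((0:V), (ξ x).1) = D2 ((0:V), d) ((0:V), v) := by
      simpa [hz] using this
    have : ((0:V), (ξ x).1 - v) = ((0:V), (ξ x).1) - ((0:V), v) := by
      simp [Prod.ext_iff]
    rw [this, map_sub, h2, sub_self]
  have hxi1 : (ξ x).1 = v := by
    have h0 : ((0 : V), (ξ x).1 - v) = (0 : V × V) := by
      apply hreg x
      intro b
      rw [hω]
      have : D2 ((0:V), (ξ x).1 - v) ((0:V), b.1) = 0 := by
        rw [hsymm]; exact h1 b.1
      simp [this, Prod.mk_zero_zero]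
    have := congrArg Prod.snd h0
    simpa [sub_eq_zero] using this
  -- derivative of the vertical-lift function
  have hXd : HasFDerivAt (fun y : V × V => X y.1) ((fderiv ℝ X q).comp (ContinuousLinearMap.fst ℝ V V)) x :=
    ((hX.differentiable (by simp) q).hasFDerivAt).comp x hasFDerivAt_fst
  have hU2 : HasFDerivAt (fun y : V × V => ((0 : V), X y.1))
      ((0 : (V × V) →L[ℝ] V).prod ((fderiv ℝ X q).comp (ContinuousLinearMap.fst ℝ V V))) x :=
    HasFDerivAt.prodMk (hasFDerivAt_const (0 : V) x) hXd
  have hf : HasFDerivAt (fun y => fderiv ℝ L y (vlift X y))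
      ((D x).comp ((0 : (V × V) →L[ℝ] V).prod ((fderiv ℝ X q).comp (ContinuousLinearMap.fst ℝ V V))) +
        D2.flip ((0 : V), X q)) x := by
    simpa [vlift] using hD2.clm_apply hU2
  rw [hf.fderiv]
  have key := hEL (clift X x)
  simp only [clift, hxi1] at key ⊢
  simp only [ContinuousLinearMap.add_apply, ContinuousLinearMap.coe_comp',
    Function.comp_apply, ContinuousLinearMap.prod_apply, ContinuousLinearMap.zero_apply,
    ContinuousLinearMap.flip_apply, ContinuousLinearMap.coe_fst', hxi1] at key ⊢
  linarith
end
end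

section
/- Let (L, β) be a forced Lagrangian system and X a vector field on Q such that d(ℒ_{X^c} α_L) = 0. Then X is a Lie symmetry (i.e., [X^c, ξ_{L,β}] = 0) if and only if ℒ_{X^c} β = −d(X^c(E_L)). -/
/- Formalization in the smooth vector-space model: Q is modelled by a real
normed space `V`, so `TQ = V × V` with coordinates `(q, q̇)`.  Vector fields,
1-forms, exterior derivatives, Lie derivatives and brackets are expressed via
the Fréchet derivative `fderiv`. -/

noncomputable section

variable {V : Type*} [NormedAddCommGroup V] [NormedSpace ℝ V]

section AuxLemmas

variable {E F : Type*} [NormedAddCommGroup E] [NormedSpace ℝ E]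
  [NormedAddCommGroup F] [NormedSpace ℝ F]

/-- Symmetry of the second derivative of a smooth map. -/
lemma aux_symm2 {f : E → F} (hf : ContDiff ℝ (⊤ : ℕ∞) f) (x a b : E) :
    fderiv ℝ (fderiv ℝ f) x a b = fderiv ℝ (fderiv ℝ f) x b a :=
  second_derivative_symmetric (fun y => (hf.differentiable (by simp) y).hasFDerivAt)
    (((hf.fderiv_right (m := (⊤ : ℕ∞)) (by simp)).differentiable (by simp) x).hasFDerivAt) a b

lemma aux_symm2_apply {α : E → E →L[ℝ] F} (hα : ContDiff ℝ (⊤ : ℕ∞) α) (x a b w : E) :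
    fderiv ℝ (fderiv ℝ α) x a b w = fderiv ℝ (fderiv ℝ α) x b a w := by
  rw [aux_symm2 hα x a b]

/-- Leibniz rule for the contraction of a 1-form (or CLM-valued map) with a
vector field. -/
lemma aux_fd_apply {c : E → E →L[ℝ] F} {u : E → E} {x : E}
    (hc : DifferentiableAt ℝ c x) (hu : DifferentiableAt ℝ u x) (v : E) :
    fderiv ℝ (fun y => c y (u y)) x v
      = c x (fderiv ℝ u x v) + fderiv ℝ c x v (u x) := by
  rw [fderiv_clm_apply hc hu]
  simp

lemma aux_fd_apply_const {c : E → E →L[ℝ] F} {x : E}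
    (hc : DifferentiableAt ℝ c x) (b v : E) :
    fderiv ℝ (fun y => c y b) x v = fderiv ℝ c x v b := by
  rw [aux_fd_apply hc (differentiableAt_const b) v]
  simp

lemma aux_fd_comp_apply {c : E → E →L[ℝ] ℝ} {d : E → E →L[ℝ] E} {x : E}
    (hc : DifferentiableAt ℝ c x) (hd : DifferentiableAt ℝ d x) (v b : E) :
    fderiv ℝ (fun y => (c y).comp (d y)) x v b
      = c x (fderiv ℝ d x v b) + fderiv ℝ c x v (d x b) := by
  rw [fderiv_clm_comp hc hd]
  simp

end AuxLemmas

section StarLemma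

variable {E : Type*} [NormedAddCommGroup E] [NormedSpace ℝ E]

/-- The Cartan-type identity: if `d(ℒ_Y α)` vanishes on `(ξ, b)` at `x`, then
contraction of `dα` with the bracket `[Y, ξ]` is expressed by the Lie
derivative of the contraction `ι_ξ dα`. -/
lemma aux_star (α : E → E →L[ℝ] ℝ) (hα : ContDiff ℝ (⊤ : ℕ∞) α)
    (ξ Y : E → E) (hξ : ContDiff ℝ (⊤ : ℕ∞) ξ) (hY : ContDiff ℝ (⊤ : ℕ∞) Y) (x b : E)
    (hcl : extDerivOne (lieDerivOne Y α) x (ξ x) b = 0) :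
    extDerivOne α x (vbracket Y ξ x) b
      = fderiv ℝ (fun y => extDerivOne α y (ξ y) b) x (Y x)
        + extDerivOne α x (ξ x) (fderiv ℝ Y x b) := by
  have hA : ContDiff ℝ (⊤ : ℕ∞) (fderiv ℝ α) := hα.fderiv_right (by simp)
  have hAd : ∀ y, DifferentiableAt ℝ (fderiv ℝ α) y :=
    fun y => hA.differentiable (by simp) y
  have hξd : ∀ y, DifferentiableAt ℝ ξ y := fun y => hξ.differentiable (by simp) y
  have hYd : ∀ y, DifferentiableAt ℝ Y y := fun y => hY.differentiable (by simp) y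
  have hDY : ContDiff ℝ (⊤ : ℕ∞) (fderiv ℝ Y) := hY.fderiv_right (by simp)
  have hαd : ∀ y, DifferentiableAt ℝ α y := fun y => hα.differentiable (by simp) y
  -- derivative of the contraction `y ↦ (dα)_y (ξ y) b`
  have h1 : fderiv ℝ (fun y => fderiv ℝ α y (ξ y) b) x (Y x)
      = fderiv ℝ α x (fderiv ℝ ξ x (Y x)) b
        + fderiv ℝ (fderiv ℝ α) x (Y x) (ξ x) b := by
    have hc : DifferentiableAt ℝ (fun y => fderiv ℝ α y (ξ y)) x :=
      (hAd x).clm_apply (hξd x)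
    rw [aux_fd_apply_const hc b (Y x),
      aux_fd_apply (hAd x) (hξd x) (Y x)]
    simp
  have h2 : fderiv ℝ (fun y => fderiv ℝ α y b (ξ y)) x (Y x)
      = fderiv ℝ α x b (fderiv ℝ ξ x (Y x))
        + fderiv ℝ (fderiv ℝ α) x (Y x) b (ξ x) := by
    have hc : DifferentiableAt ℝ (fun y => fderiv ℝ α y b) x :=
      (hAd x).clm_apply (differentiableAt_const b)
    rw [aux_fd_apply hc (hξd x) (Y x),
      aux_fd_apply_const (hAd x) b (Y x)]
  have hd1 : DifferentiableAt ℝ (fun y => fderiv ℝ α y (ξ y) b) x :=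
    ((hAd x).clm_apply (hξd x)).clm_apply (differentiableAt_const b)
  have hd2 : DifferentiableAt ℝ (fun y => fderiv ℝ α y b (ξ y)) x :=
    ((hAd x).clm_apply (differentiableAt_const b)).clm_apply (hξd x)
  have hg : fderiv ℝ (fun y => extDerivOne α y (ξ y) b) x (Y x)
      = (fderiv ℝ α x (fderiv ℝ ξ x (Y x)) b
          + fderiv ℝ (fderiv ℝ α) x (Y x) (ξ x) b)
        - (fderiv ℝ α x b (fderiv ℝ ξ x (Y x))
          + fderiv ℝ (fderiv ℝ α) x (Y x) b (ξ x)) := by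
    have : (fun y => extDerivOne α y (ξ y) b)
        = fun y => fderiv ℝ α y (ξ y) b - fderiv ℝ α y b (ξ y) := rfl
    rw [this, fderiv_fun_sub hd1 hd2]
    simp only [ContinuousLinearMap.coe_sub', Pi.sub_apply]
    rw [h1, h2]
  -- derivative of the Lie derivative 1-form
  have hlam : ∀ v w, fderiv ℝ (lieDerivOne Y α) x v w
      = fderiv ℝ α x (fderiv ℝ Y x v) w
        + fderiv ℝ (fderiv ℝ α) x v (Y x) w
        + (α x (fderiv ℝ (fderiv ℝ Y) x v w)
          + fderiv ℝ α x v (fderiv ℝ Y x w)) := by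
    intro v w
    have hp : DifferentiableAt ℝ (fun y => fderiv ℝ α y (Y y)) x :=
      (hAd x).clm_apply (hYd x)
    have hq : DifferentiableAt ℝ (fun y => (α y).comp (fderiv ℝ Y y)) x :=
      (hαd x).clm_comp (hDY.differentiable (by simp) x)
    have hrw : lieDerivOne Y α
        = fun y => (fun z => fderiv ℝ α z (Y z)) y
            + (fun z => (α z).comp (fderiv ℝ Y z)) y := rfl
    rw [hrw, fderiv_fun_add hp hq]
    simp only [ContinuousLinearMap.coe_add', Pi.add_apply,
      ContinuousLinearMap.add_apply]
    rw [aux_fd_apply (hAd x) (hYd x) v,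
      aux_fd_comp_apply (hαd x) (hDY.differentiable (by simp) x) v w]
    simp
  -- expand the closedness hypothesis
  have hcl' : fderiv ℝ α x (fderiv ℝ Y x (ξ x)) b
        + fderiv ℝ (fderiv ℝ α) x (ξ x) (Y x) b
        + fderiv ℝ α x (ξ x) (fderiv ℝ Y x b)
        - (fderiv ℝ α x (fderiv ℝ Y x b) (ξ x)
          + fderiv ℝ (fderiv ℝ α) x b (Y x) (ξ x)
          + fderiv ℝ α x b (fderiv ℝ Y x (ξ x))) = 0 := by
    have h := hcl
    have hrw : extDerivOne (lieDerivOne Y α) x (ξ x) b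
        = fderiv ℝ (lieDerivOne Y α) x (ξ x) b
          - fderiv ℝ (lieDerivOne Y α) x b (ξ x) := rfl
    rw [hrw, hlam (ξ x) b, hlam b (ξ x)] at h
    have hsY : α x (fderiv ℝ (fderiv ℝ Y) x (ξ x) b)
        = α x (fderiv ℝ (fderiv ℝ Y) x b (ξ x)) := by
      rw [aux_symm2 hY x (ξ x) b]
    linarith
  -- symmetry of the second derivative of `α`
  have hs1 : fderiv ℝ (fderiv ℝ α) x (Y x) (ξ x) b
      = fderiv ℝ (fderiv ℝ α) x (ξ x) (Y x) b := aux_symm2_apply hα x (Y x) (ξ x) b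
  have hs2 : fderiv ℝ (fderiv ℝ α) x (Y x) b (ξ x)
      = fderiv ℝ (fderiv ℝ α) x b (Y x) (ξ x) := aux_symm2_apply hα x (Y x) b (ξ x)
  -- put everything together
  have hbr : extDerivOne α x (vbracket Y ξ x) b
      = (fderiv ℝ α x (fderiv ℝ ξ x (Y x)) b - fderiv ℝ α x (fderiv ℝ Y x (ξ x)) b)
        - (fderiv ℝ α x b (fderiv ℝ ξ x (Y x)) - fderiv ℝ α x b (fderiv ℝ Y x (ξ x))) := by
    simp [extDerivOne, vbracket]
  have hex : extDerivOne α x (ξ x) (fderiv ℝ Y x b)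
      = fderiv ℝ α x (ξ x) (fderiv ℝ Y x b)
        - fderiv ℝ α x (fderiv ℝ Y x b) (ξ x) := rfl
  rw [hbr, hg, hex]
  linarith

end StarLemma

/-- If `d(ℒ_{X^c} α_L) = 0`, then `X` is a Lie symmetry (`[X^c, ξ_{L,β}] = 0`)
iff `ℒ_{X^c} β = −d(X^c(E_L))`. -/
theorem lie_symmetry_characterization
    (L : V × V → ℝ) (hL : ContDiff ℝ (⊤ : ℕ∞) L) (hreg : RegularLag L)
    (β : V × V → (V × V) →L[ℝ] ℝ) (hβ : ContDiff ℝ (⊤ : ℕ∞) β) (hsb : SemibasicTQ β)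
    (ξ : V × V → V × V) (hξ : IsForcedEL L β ξ) (hξs : ContDiff ℝ (⊤ : ℕ∞) ξ)
    (X : V → V) (hX : ContDiff ℝ (⊤ : ℕ∞) X)
    (hclosed : ∀ x a b, extDerivOne (lieDerivOne (clift X) (alphaL L)) x a b = 0) :
    (∀ x, vbracket (clift X) ξ x = 0) ↔
      (∀ x v, lieDerivOne (clift X) β x v =
        -(fderiv ℝ (fun y => fderiv ℝ (energyL L) y (clift X y)) x v)) := by
  -- smoothness of the basic objects
  have hαs : ContDiff ℝ (⊤ : ℕ∞) (alphaL L) := by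
    have h1 : ContDiff ℝ (⊤ : ℕ∞) (fderiv ℝ L) := hL.fderiv_right (by simp)
    have h2 : alphaL L = fun x =>
        ((ContinuousLinearMap.compL ℝ (V × V) (V × V) ℝ).flip (vertEndo V))
          (fderiv ℝ L x) := by
      funext x
      simp [alphaL, ContinuousLinearMap.flip_apply, ContinuousLinearMap.compL_apply]
    rw [h2]
    exact (ContinuousLinearMap.contDiff _).comp h1
  have hEs : ContDiff ℝ (⊤ : ℕ∞) (energyL L) := by
    have h1 : ContDiff ℝ (⊤ : ℕ∞) (fderiv ℝ L) := hL.fderiv_right (by simp)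
    exact ((h1.clm_apply (contDiff_const.prodMk contDiff_snd)).sub hL)
  have hYs : ContDiff ℝ (⊤ : ℕ∞) (clift X) := by
    have h1 : ContDiff ℝ (⊤ : ℕ∞) (fderiv ℝ X) := hX.fderiv_right (by simp)
    exact (hX.comp contDiff_fst).prodMk
      ((h1.comp contDiff_fst).clm_apply contDiff_snd)
  have hE' : ContDiff ℝ (⊤ : ℕ∞) (fderiv ℝ (energyL L)) := hEs.fderiv_right (by simp)
  -- the fundamental identity
  have key : ∀ x b, omegaL L x (vbracket (clift X) ξ x) b
      = fderiv ℝ (fun y => fderiv ℝ (energyL L) y (clift X y)) x b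
        + lieDerivOne (clift X) β x b := by
    intro x b
    have hstar := aux_star (alphaL L) hαs ξ (clift X) hξs hYs x b
      (hclosed x (ξ x) b)
    have hfun : (fun y => extDerivOne (alphaL L) y (ξ y) b)
        = fun y => -(fderiv ℝ (energyL L) y b + β y b) := by
      funext y
      have h := hξ y b
      simp only [omegaL] at h
      linarith
    rw [hfun] at hstar
    have hdf : DifferentiableAt ℝ (fun y => fderiv ℝ (energyL L) y b) x :=
      (hE'.differentiable (by simp) x).clm_apply (differentiableAt_const b)
    have hdg : DifferentiableAt ℝ (fun y => β y b) x :=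
      (hβ.differentiable (by simp) x).clm_apply (differentiableAt_const b)
    have hneg : fderiv ℝ (fun y => -(fderiv ℝ (energyL L) y b + β y b)) x (clift X x)
        = -(fderiv ℝ (fderiv ℝ (energyL L)) x (clift X x) b
            + fderiv ℝ β x (clift X x) b) := by
      have hrw : (fun y => -(fderiv ℝ (energyL L) y b + β y b))
          = fun y => -((fun z => fderiv ℝ (energyL L) z b) y + (fun z => β z b) y) := rfl
      rw [hrw, fderiv_fun_neg, fderiv_fun_add hdf hdg]
      simp only [ContinuousLinearMap.neg_apply, ContinuousLinearMap.coe_add',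
        Pi.add_apply, ContinuousLinearMap.add_apply]
      rw [aux_fd_apply_const (hE'.differentiable (by simp) x) b (clift X x),
        aux_fd_apply_const (hβ.differentiable (by simp) x) b (clift X x)]
    have hterm2 : extDerivOne (alphaL L) x (ξ x) (fderiv ℝ (clift X) x b)
        = -(fderiv ℝ (energyL L) x (fderiv ℝ (clift X) x b)
            + β x (fderiv ℝ (clift X) x b)) := by
      have h := hξ x (fderiv ℝ (clift X) x b)
      simp only [omegaL] at h
      linarith
    have h5 : fderiv ℝ (fun y => fderiv ℝ (energyL L) y (clift X y)) x b
        = fderiv ℝ (energyL L) x (fderiv ℝ (clift X) x b)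
          + fderiv ℝ (fderiv ℝ (energyL L)) x b (clift X x) :=
      aux_fd_apply (hE'.differentiable (by simp) x) (hYs.differentiable (by simp) x) b
    have hs : fderiv ℝ (fderiv ℝ (energyL L)) x (clift X x) b
        = fderiv ℝ (fderiv ℝ (energyL L)) x b (clift X x) :=
      aux_symm2 hEs x (clift X x) b
    have hlie : lieDerivOne (clift X) β x b
        = fderiv ℝ β x (clift X x) b + β x (fderiv ℝ (clift X) x b) := by
      simp [lieDerivOne]
    have homega : omegaL L x (vbracket (clift X) ξ x) b
        = -extDerivOne (alphaL L) x (vbracket (clift X) ξ x) b := rfl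
    rw [homega, hstar, hneg, hterm2, h5, hlie]
    linarith
  constructor
  · intro h x v
    have hk := key x v
    rw [h x] at hk
    have h0 : omegaL L x 0 v = 0 := by
      simp [omegaL, extDerivOne]
    rw [h0] at hk
    linarith
  · intro h x
    apply hreg x
    intro b
    have hk := key x b
    rw [h x b] at hk
    linarith
end
end

section
/- Let (L, β) be a forced Lagrangian system and X a Noether symmetry (i.e., X^c(E_L) + β(X^c) = 0 and ℒ_{X^c} α_L is exact). Then X is a Lie symmetry (i.e., [X^c, ξ_{L,β}] = 0) if and only if ι_{X^c} dβ = 0. -/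
/- Formalization in the smooth vector-space model: Q is modelled by a real
normed space `V`, so `TQ = V × V` with coordinates `(q, q̇)`.  Vector fields,
1-forms, exterior derivatives, Lie derivatives and brackets are expressed via
the Fréchet derivative `fderiv`. -/

noncomputable section

variable {V : Type*} [NormedAddCommGroup V] [NormedSpace ℝ V]

section AuxProof
variable {V : Type*} [NormedAddCommGroup V] [NormedSpace ℝ V]

lemma zero_deriv {E : Type*} [NormedAddCommGroup E] [NormedSpace ℝ E]
    {g : E → ℝ} {D : E →L[ℝ] ℝ} {x : E} (h : ∀ y, g y = 0)
    (hg : HasFDerivAt g D x) : D = 0 := by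
  have h2 : HasFDerivAt g (0 : E →L[ℝ] ℝ) x := by
    have : g = fun _ => (0 : ℝ) := funext h
    rw [this]; exact hasFDerivAt_const 0 x
  exact hg.unique h2

lemma key (L : V × V → ℝ) (hL : ContDiff ℝ (⊤ : ℕ∞) L)
    (β : V × V → (V × V) →L[ℝ] ℝ) (hβ : ContDiff ℝ (⊤ : ℕ∞) β)
    (ξ : V × V → V × V) (hξ : IsForcedEL L β ξ) (hξs : ContDiff ℝ (⊤ : ℕ∞) ξ)
    (X : V → V) (hX : ContDiff ℝ (⊤ : ℕ∞) X)
    (hnoe : ∀ x, fderiv ℝ (energyL L) x (clift X x) + β x (clift X x) = 0)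
    (f : V × V → ℝ) (hf : ContDiff ℝ (⊤ : ℕ∞) f)
    (hfe : ∀ x, lieDerivOne (clift X) (alphaL L) x = fderiv ℝ f x)
    (x b : V × V) :
    omegaL L x (vbracket (clift X) ξ x) b = extDerivOne β x (clift X x) b := by
  -- smoothness
  have hA : ContDiff ℝ (⊤ : ℕ∞) (alphaL L) := by
    unfold alphaL; exact (hL.fderiv_right (by simp)).clm_comp contDiff_const
  have hEn : ContDiff ℝ (⊤ : ℕ∞) (energyL L) := by
    unfold energyL
    exact ((hL.fderiv_right (by simp)).clm_apply (contDiff_const.prodMk contDiff_snd)).sub hL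
  have hY : ContDiff ℝ (⊤ : ℕ∞) (clift X) := by
    unfold clift
    exact (hX.comp contDiff_fst).prodMk
      (((hX.fderiv_right (by simp)).comp contDiff_fst).clm_apply contDiff_snd)
  have hA' : ContDiff ℝ (⊤ : ℕ∞) (fderiv ℝ (alphaL L)) := hA.fderiv_right (by simp)
  have hEn' : ContDiff ℝ (⊤ : ℕ∞) (fderiv ℝ (energyL L)) := hEn.fderiv_right (by simp)
  have hY' : ContDiff ℝ (⊤ : ℕ∞) (fderiv ℝ (clift X)) := hY.fderiv_right (by simp)
  have hf' : ContDiff ℝ (⊤ : ℕ∞) (fderiv ℝ f) := hf.fderiv_right (by simp)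
  -- HasFDerivAt facts at x
  have HA : HasFDerivAt (alphaL L) (fderiv ℝ (alphaL L) x) x :=
    ((hA.differentiable (by simp)) x).hasFDerivAt
  have HDA : HasFDerivAt (fderiv ℝ (alphaL L)) (fderiv ℝ (fderiv ℝ (alphaL L)) x) x :=
    ((hA'.differentiable (by simp)) x).hasFDerivAt
  have HDE : HasFDerivAt (fderiv ℝ (energyL L)) (fderiv ℝ (fderiv ℝ (energyL L)) x) x :=
    ((hEn'.differentiable (by simp)) x).hasFDerivAt
  have HB : HasFDerivAt β (fderiv ℝ β x) x := ((hβ.differentiable (by simp)) x).hasFDerivAt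
  have HXI : HasFDerivAt ξ (fderiv ℝ ξ x) x := ((hξs.differentiable (by simp)) x).hasFDerivAt
  have HY : HasFDerivAt (clift X) (fderiv ℝ (clift X) x) x :=
    ((hY.differentiable (by simp)) x).hasFDerivAt
  have HDY : HasFDerivAt (fderiv ℝ (clift X)) (fderiv ℝ (fderiv ℝ (clift X)) x) x :=
    ((hY'.differentiable (by simp)) x).hasFDerivAt
  have HDF : HasFDerivAt (fderiv ℝ f) (fderiv ℝ (fderiv ℝ f) x) x :=
    ((hf'.differentiable (by simp)) x).hasFDerivAt
  -- rearranged forced EL equation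
  have hxi : ∀ (y b' : V × V), fderiv ℝ (alphaL L) y b' (ξ y) - fderiv ℝ (alphaL L) y (ξ y) b'
      = fderiv ℝ (energyL L) y b' + β y b' := by
    intro y b'
    have := hξ y b'
    simp only [omegaL, extDerivOne] at this
    linarith
  -- Fact A : derivative of the forced EL equation in direction Y x
  have factA : fderiv ℝ (fderiv ℝ (alphaL L)) x (clift X x) b (ξ x)
      + fderiv ℝ (alphaL L) x b (fderiv ℝ ξ x (clift X x))
      - (fderiv ℝ (fderiv ℝ (alphaL L)) x (clift X x) (ξ x) b
        + fderiv ℝ (alphaL L) x (fderiv ℝ ξ x (clift X x)) b)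
      - (fderiv ℝ (fderiv ℝ (energyL L)) x (clift X x) b + fderiv ℝ β x (clift X x) b) = 0 := by
    have h1 := (((HDA.clm_apply (hasFDerivAt_const b x)).clm_apply HXI).sub
        ((HDA.clm_apply HXI).clm_apply (hasFDerivAt_const b x))).sub
        ((HDE.clm_apply (hasFDerivAt_const b x)).add (HB.clm_apply (hasFDerivAt_const b x)))
    have h2 := zero_deriv (fun y => by have := hxi y b; simp only [Pi.sub_apply, Pi.add_apply]; linarith) h1
    have h3 := congrArg (fun D : (V × V) →L[ℝ] ℝ => D (clift X x)) h2
    simp at h3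
    linarith
  -- Fact B : derivative of Noether condition in direction b
  have factB : fderiv ℝ (fderiv ℝ (energyL L)) x b (clift X x)
      + fderiv ℝ (energyL L) x (fderiv ℝ (clift X) x b)
      + (fderiv ℝ β x b (clift X x) + β x (fderiv ℝ (clift X) x b)) = 0 := by
    have h1 := (HDE.clm_apply HY).add (HB.clm_apply HY)
    have h2 := zero_deriv hnoe h1
    have h3 := congrArg (fun D : (V × V) →L[ℝ] ℝ => D b) h2
    simp at h3
    linarith
  -- Fact C : derivative of the exactness (Lie derivative) condition
  have factC : ∀ b' c' : V × V,
      fderiv ℝ (fderiv ℝ (alphaL L)) x c' (clift X x) b'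
      + fderiv ℝ (alphaL L) x (fderiv ℝ (clift X) x c') b'
      + (alphaL L x (fderiv ℝ (fderiv ℝ (clift X)) x c' b')
        + fderiv ℝ (alphaL L) x c' (fderiv ℝ (clift X) x b'))
      - fderiv ℝ (fderiv ℝ f) x c' b' = 0 := by
    intro b' c'
    have h0 : ∀ y, (fderiv ℝ (alphaL L) y (clift X y) b'
        + alphaL L y (fderiv ℝ (clift X) y b')) - fderiv ℝ f y b' = 0 := by
      intro y
      have := congrArg (fun D : (V × V) →L[ℝ] ℝ => D b') (hfe y)
      simp only [lieDerivOne, ContinuousLinearMap.add_apply,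
        ContinuousLinearMap.coe_comp', Function.comp_apply] at this
      linarith
    have h1 := ((((HDA.clm_apply HY).clm_apply (hasFDerivAt_const b' x)).add
        (HA.clm_apply (HDY.clm_apply (hasFDerivAt_const b' x)))).sub
        (HDF.clm_apply (hasFDerivAt_const b' x)))
    have h2 := zero_deriv h0 h1
    have h3 := congrArg (fun D : (V × V) →L[ℝ] ℝ => D c') h2
    simp at h3
    linarith
  -- symmetry of second derivatives
  have symA : ∀ u w : V × V, fderiv ℝ (fderiv ℝ (alphaL L)) x u w
      = fderiv ℝ (fderiv ℝ (alphaL L)) x w u :=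
    second_derivative_symmetric (fun y => ((hA.differentiable (by simp)) y).hasFDerivAt) HDA
  have symE : ∀ u w : V × V, fderiv ℝ (fderiv ℝ (energyL L)) x u w
      = fderiv ℝ (fderiv ℝ (energyL L)) x w u :=
    second_derivative_symmetric (fun y => ((hEn.differentiable (by simp)) y).hasFDerivAt) HDE
  have symY : ∀ u w : V × V, fderiv ℝ (fderiv ℝ (clift X)) x u w
      = fderiv ℝ (fderiv ℝ (clift X)) x w u :=
    second_derivative_symmetric (fun y => ((hY.differentiable (by simp)) y).hasFDerivAt) HDY
  have symf : ∀ u w : V × V, fderiv ℝ (fderiv ℝ f) x u w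
      = fderiv ℝ (fderiv ℝ f) x w u :=
    second_derivative_symmetric (fun y => ((hf.differentiable (by simp)) y).hasFDerivAt) HDF
  -- assemble
  have s1 := congrArg (fun D : (V × V) →L[ℝ] ℝ => D (ξ x)) (symA (clift X x) b)
  have s2 := congrArg (fun D : (V × V) →L[ℝ] ℝ => D b) (symA (clift X x) (ξ x))
  have s3 := symE (clift X x) b
  have s4 := congrArg (alphaL L x) (symY (ξ x) b)
  have s5 := symf (ξ x) b
  have hxib := hxi x (fderiv ℝ (clift X) x b)
  have c1 := factC b (ξ x)
  have c2 := factC (ξ x) b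
  simp only [omegaL, extDerivOne, vbracket, map_sub, ContinuousLinearMap.sub_apply]
  linarith

end AuxProof

/-- A Noether symmetry is a Lie symmetry iff `ι_{X^c} dβ = 0`. -/
theorem noether_symmetry_is_lie_symmetry_iff
    (L : V × V → ℝ) (hL : ContDiff ℝ (⊤ : ℕ∞) L) (hreg : RegularLag L)
    (β : V × V → (V × V) →L[ℝ] ℝ) (hβ : ContDiff ℝ (⊤ : ℕ∞) β) (hsb : SemibasicTQ β)
    (ξ : V × V → V × V) (hξ : IsForcedEL L β ξ) (hξs : ContDiff ℝ (⊤ : ℕ∞) ξ)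
    (X : V → V) (hX : ContDiff ℝ (⊤ : ℕ∞) X)
    -- X is a Noether symmetry:
    (hnoe : ∀ x, fderiv ℝ (energyL L) x (clift X x) + β x (clift X x) = 0)
    (hexact : ∃ f : V × V → ℝ, ContDiff ℝ (⊤ : ℕ∞) f ∧
      ∀ x, lieDerivOne (clift X) (alphaL L) x = fderiv ℝ f x) :
    (∀ x, vbracket (clift X) ξ x = 0) ↔
      (∀ x v, extDerivOne β x (clift X x) v = 0) := by
  obtain ⟨f, hf, hfe⟩ := hexact
  constructor
  · intro h x v
    have hk := key L hL β hβ ξ hξ hξs X hX hnoe f hf hfe x v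
    rw [h x] at hk
    simp [omegaL, extDerivOne] at hk ⊢
    linarith
  · intro h x
    apply hreg x
    intro b
    rw [key L hL β hβ ξ hξ hξs X hX hnoe f hf hfe x b]
    exact h x b
end
end

section
/- Let (L, β) be a forced Lagrangian system and X a vector field on Q with ℒ_{X^c} α_L = df for some function f : TQ → ℝ. Then X is a Noether symmetry (i.e., X^c(E_L) + β(X^c) = 0) if and only if f − X^v(L) is a constant of the motion of ξ_{L,β}. -/
/- Formalization in the smooth vector-space model: Q is modelled by a real
normed space `V`, so `TQ = V × V` with coordinates `(q, q̇)`.  Vector fields,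
1-forms, exterior derivatives, Lie derivatives and brackets are expressed via
the Fréchet derivative `fderiv`. -/

noncomputable section

variable {V : Type*} [NormedAddCommGroup V] [NormedSpace ℝ V]

/-- If `ℒ_{X^c} α_L = df`, then `X` is a Noether symmetry
(`X^c(E_L) + β(X^c) = 0`) iff `f − X^v(L)` is a constant of the motion. -/
theorem noether_symmetry_iff_conserved
    (L : V × V → ℝ) (hL : ContDiff ℝ (⊤ : ℕ∞) L) (hreg : RegularLag L)
    (β : V × V → (V × V) →L[ℝ] ℝ) (hβ : ContDiff ℝ (⊤ : ℕ∞) β) (hsb : SemibasicTQ β)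
    (ξ : V × V → V × V) (hξ : IsForcedEL L β ξ) (hξs : ContDiff ℝ (⊤ : ℕ∞) ξ)
    (X : V → V) (hX : ContDiff ℝ (⊤ : ℕ∞) X)
    (f : V × V → ℝ) (hf : ContDiff ℝ (⊤ : ℕ∞) f)
    (hlie : ∀ x, lieDerivOne (clift X) (alphaL L) x = fderiv ℝ f x) :
    (∀ x, fderiv ℝ (energyL L) x (clift X x) + β x (clift X x) = 0) ↔
      (∀ x, fderiv ℝ (fun y => f y - fderiv ℝ L y (vlift X y)) x (ξ x) = 0) := by
  have hL' : ContDiff ℝ (⊤ : ℕ∞) (fderiv ℝ L) := hL.fderiv_right (by simp)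
  have hXd : ContDiff ℝ (⊤ : ℕ∞) (fderiv ℝ X) := hX.fderiv_right (by simp)
  have hY : ContDiff ℝ (⊤ : ℕ∞) (clift X) :=
    (hX.comp contDiff_fst).prodMk ((hXd.comp contDiff_fst).clm_apply contDiff_snd)
  have hαeq : alphaL L = fun y =>
      ((ContinuousLinearMap.compL ℝ (V × V) (V × V) ℝ).flip (vertEndo V)) (fderiv ℝ L y) := rfl
  have hα : ContDiff ℝ (⊤ : ℕ∞) (alphaL L) := by
    rw [hαeq]
    exact (ContinuousLinearMap.compL ℝ (V × V) (V × V) ℝ).flip (vertEndo V)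
      |>.contDiff.comp hL'
  have key : ∀ x, fderiv ℝ (fun y => f y - fderiv ℝ L y (vlift X y)) x (ξ x)
      = fderiv ℝ (energyL L) x (clift X x) + β x (clift X x) := by
    intro x
    have hgeq : (fun y => fderiv ℝ L y (vlift X y))
        = fun y => alphaL L y (clift X y) := by
      funext y
      simp [alphaL, vlift, clift, vertEndo]
    have hga : HasFDerivAt (fun y => alphaL L y (clift X y))
        ((alphaL L x).comp (fderiv ℝ (clift X) x)
          + (fderiv ℝ (alphaL L) x).flip (clift X x)) x :=
      (hα.differentiable (by simp) x).hasFDerivAt.clm_apply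
        (hY.differentiable (by simp) x).hasFDerivAt
    have hg : HasFDerivAt (fun y => fderiv ℝ L y (vlift X y))
        ((alphaL L x).comp (fderiv ℝ (clift X) x)
          + (fderiv ℝ (alphaL L) x).flip (clift X x)) x := hgeq ▸ hga
    have hsub : fderiv ℝ (fun y => f y - fderiv ℝ L y (vlift X y)) x
        = fderiv ℝ f x - fderiv ℝ (fun y => fderiv ℝ L y (vlift X y)) x :=
      fderiv_sub (hf.differentiable (by simp) x) hg.differentiableAt
    have hω := hξ x (clift X x)
    unfold omegaL extDerivOne at hω
    have hfd := (hlie x).symm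
    unfold lieDerivOne at hfd
    rw [hsub, ContinuousLinearMap.sub_apply, hfd, hg.fderiv]
    simp only [ContinuousLinearMap.add_apply, ContinuousLinearMap.comp_apply,
      ContinuousLinearMap.flip_apply]
    linarith [hω]
  exact ⟨fun h x => by rw [key x]; exact h x, fun h x => by rw [← key x]; exact h x⟩
end
end

section
/- Let (L, β) be a forced Lagrangian system and X a Noether symmetry. Then X is a symmetry of the forced Lagrangian system (i.e., X^c(L) = β(X^c)) if and only if ℒ_{X^c} α_L = 0. -/
/- Formalization in the smooth vector-space model: Q is modelled by a real
normed space `V`, so `TQ = V × V` with coordinates `(q, q̇)`.  Vector fields,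
1-forms, exterior derivatives, Lie derivatives and brackets are expressed via
the Fréchet derivative `fderiv`. -/

noncomputable section

variable {V : Type*} [NormedAddCommGroup V] [NormedSpace ℝ V]

/-! ### Auxiliary lemmas -/

/-- Derivative of the complete lift. -/
def cliftD (X : V → V) (x : V × V) : (V × V) →L[ℝ] V × V :=
  ((fderiv ℝ X x.1).comp (ContinuousLinearMap.fst ℝ V V)).prod
    ((fderiv ℝ X x.1).comp (ContinuousLinearMap.snd ℝ V V) +
      ((fderiv ℝ (fderiv ℝ X) x.1).comp (ContinuousLinearMap.fst ℝ V V)).flip x.2)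

lemma hasFDerivAt_clift {X : V → V} (hX : ContDiff ℝ (⊤ : ℕ∞) X) (x : V × V) :
    HasFDerivAt (clift X) (cliftD X x) x := by
  have h1 : HasFDerivAt (fun y : V × V => X y.1)
      ((fderiv ℝ X x.1).comp (ContinuousLinearMap.fst ℝ V V)) x :=
    ((hX.differentiable (by simp) x.1).hasFDerivAt).comp x hasFDerivAt_fst
  have hc : HasFDerivAt (fun y : V × V => fderiv ℝ X y.1)
      ((fderiv ℝ (fderiv ℝ X) x.1).comp (ContinuousLinearMap.fst ℝ V V)) x :=
    (((hX.fderiv_right (m := 1) (WithTop.coe_le_coe.mpr le_top)).differentiable (by simp) x.1).hasFDerivAt).comp x hasFDerivAt_fst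
  exact h1.prodMk (hc.clm_apply hasFDerivAt_snd)

lemma cliftD_apply (X : V → V) (x c : V × V) : cliftD X x c =
    (fderiv ℝ X x.1 c.1, fderiv ℝ X x.1 c.2 + fderiv ℝ (fderiv ℝ X) x.1 c.1 x.2) := by
  simp [cliftD]

/-- Derivative of `g : x ↦ dL(x)(X^c x)`. -/
def gD (L : V × V → ℝ) (X : V → V) (x : V × V) : (V × V) →L[ℝ] ℝ :=
  (fderiv ℝ L x).comp (cliftD X x) + (fderiv ℝ (fderiv ℝ L) x).flip (clift X x)

lemma hasFDerivAt_dL {L : V × V → ℝ} (hL : ContDiff ℝ (⊤ : ℕ∞) L) (x : V × V) :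
    HasFDerivAt (fderiv ℝ L) (fderiv ℝ (fderiv ℝ L) x) x :=
  ((hL.fderiv_right (m := 1) (WithTop.coe_le_coe.mpr le_top)).differentiable (by simp) x).hasFDerivAt

lemma sym_sndDeriv {L : V × V → ℝ} (hL : ContDiff ℝ (⊤ : ℕ∞) L) (x a b : V × V) :
    fderiv ℝ (fderiv ℝ L) x a b = fderiv ℝ (fderiv ℝ L) x b a :=
  second_derivative_symmetric (fun y => (hL.differentiable (by simp) y).hasFDerivAt)
    (hasFDerivAt_dL hL x) a b

lemma hasFDerivAt_alphaL {L : V × V → ℝ} (hL : ContDiff ℝ (⊤ : ℕ∞) L) (x : V × V) :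
    HasFDerivAt (alphaL L)
      (((ContinuousLinearMap.compL ℝ (V × V) (V × V) ℝ).flip (vertEndo V)).comp
        (fderiv ℝ (fderiv ℝ L) x)) x := by
  have : alphaL L = fun y =>
      ((ContinuousLinearMap.compL ℝ (V × V) (V × V) ℝ).flip (vertEndo V)) (fderiv ℝ L y) := rfl
  rw [this]
  exact (ContinuousLinearMap.hasFDerivAt _).comp x (hasFDerivAt_dL hL x)

lemma vertEndo_apply (b : V × V) : vertEndo V b = (0, b.1) := rfl

/-- Key identity: `ℒ_{X^c} α_L (x)(b) = Dg(x)(0, b₁)`. -/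
lemma lie_eq_gD {L : V × V → ℝ} {X : V → V}
    (hL : ContDiff ℝ (⊤ : ℕ∞) L) (hX : ContDiff ℝ (⊤ : ℕ∞) X) (x b : V × V) :
    lieDerivOne (clift X) (alphaL L) x b = gD L X x (0, b.1) := by
  rw [lieDerivOne]
  rw [(hasFDerivAt_alphaL hL x).fderiv, (hasFDerivAt_clift hX x).fderiv]
  simp only [ContinuousLinearMap.add_apply, ContinuousLinearMap.coe_comp', Function.comp_apply,
    ContinuousLinearMap.flip_apply, ContinuousLinearMap.compL_apply, gD, alphaL,
    cliftD_apply, vertEndo_apply, map_zero, zero_add,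
    ContinuousLinearMap.zero_apply, add_zero]
  rw [sym_sndDeriv hL x (clift X x) (0, b.1)]
  ring

/-- Derivative of the energy. -/
lemma hasFDerivAt_energy {L : V × V → ℝ} (hL : ContDiff ℝ (⊤ : ℕ∞) L) (x : V × V) :
    HasFDerivAt (energyL L)
      ((fderiv ℝ L x).comp ((ContinuousLinearMap.inr ℝ V V).comp (ContinuousLinearMap.snd ℝ V V))
        + (fderiv ℝ (fderiv ℝ L) x).flip (0, x.2) - fderiv ℝ L x) x := by
  have h1 : HasFDerivAt (fun y : V × V => fderiv ℝ L y
      (((ContinuousLinearMap.inr ℝ V V).comp (ContinuousLinearMap.snd ℝ V V)) y))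
      ((fderiv ℝ L x).comp ((ContinuousLinearMap.inr ℝ V V).comp (ContinuousLinearMap.snd ℝ V V))
        + (fderiv ℝ (fderiv ℝ L) x).flip
          (((ContinuousLinearMap.inr ℝ V V).comp (ContinuousLinearMap.snd ℝ V V)) x)) x :=
    (hasFDerivAt_dL hL x).clm_apply (ContinuousLinearMap.hasFDerivAt _)
  have h2 : HasFDerivAt L (fderiv ℝ L x) x := (hL.differentiable (by simp) x).hasFDerivAt
  have := h1.sub h2
  exact this

/-- Noether translation: `dE_L(x)(X^c x) = Dg(x)(0, x₂) − g(x)`. -/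
lemma energy_deriv_clift {L : V × V → ℝ} {X : V → V}
    (hL : ContDiff ℝ (⊤ : ℕ∞) L) (hX : ContDiff ℝ (⊤ : ℕ∞) X) (x : V × V) :
    fderiv ℝ (energyL L) x (clift X x) =
      gD L X x (0, x.2) - fderiv ℝ L x (clift X x) := by
  rw [(hasFDerivAt_energy hL x).fderiv]
  simp only [ContinuousLinearMap.sub_apply, ContinuousLinearMap.add_apply,
    ContinuousLinearMap.coe_comp', Function.comp_apply, ContinuousLinearMap.flip_apply,
    gD, cliftD_apply, map_zero, zero_add, ContinuousLinearMap.inr_apply,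
    ContinuousLinearMap.coe_snd', clift, ContinuousLinearMap.zero_apply, add_zero]
  rw [sym_sndDeriv hL x (X x.1, fderiv ℝ X x.1 x.2) (0, x.2)]

/-- A Noether symmetry `X` is a symmetry of the forced Lagrangian system
(`X^c(L) = β(X^c)`) iff `ℒ_{X^c} α_L = 0`. -/
theorem noether_symmetry_is_forced_symmetry_iff
    (L : V × V → ℝ) (hL : ContDiff ℝ (⊤ : ℕ∞) L) (hreg : RegularLag L)
    (β : V × V → (V × V) →L[ℝ] ℝ) (hβ : ContDiff ℝ (⊤ : ℕ∞) β) (hsb : SemibasicTQ β)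
    (ξ : V × V → V × V) (hξ : IsForcedEL L β ξ) (hξs : ContDiff ℝ (⊤ : ℕ∞) ξ)
    (X : V → V) (hX : ContDiff ℝ (⊤ : ℕ∞) X)
    -- X is a Noether symmetry:
    (hnoe : ∀ x, fderiv ℝ (energyL L) x (clift X x) + β x (clift X x) = 0)
    (hexact : ∃ f : V × V → ℝ, ContDiff ℝ (⊤ : ℕ∞) f ∧
      ∀ x, lieDerivOne (clift X) (alphaL L) x = fderiv ℝ f x) :
    (∀ x, fderiv ℝ L x (clift X x) = β x (clift X x)) ↔
      (∀ x, lieDerivOne (clift X) (alphaL L) x = 0) := by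
  -- Noether condition rewritten: `g x = Dg(x)(0, x₂) + β(X^c)`.
  have hstar : ∀ x : V × V, fderiv ℝ L x (clift X x) = gD L X x (0, x.2) + β x (clift X x) := by
    intro x
    have := hnoe x
    rw [energy_deriv_clift hL hX x] at this
    linarith
  constructor
  · -- forward: symmetry ⇒ Lie derivative vanishes
    intro hsym
    obtain ⟨f, hf, hdf⟩ := hexact
    have hfd : ∀ (x b : V × V), fderiv ℝ f x b = gD L X x (0, b.1) := by
      intro x b
      rw [← hdf x, lie_eq_gD hL hX]
    have hf0 : ∀ (x : V × V) (w : V), fderiv ℝ f x (0, w) = 0 := by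
      intro x w
      rw [hfd x (0, w)]
      have : ((0 : V), (0 : V)) = (0 : V × V) := rfl
      rw [this, map_zero]
    -- f is constant in the fiber variable
    have hconst : ∀ (q v : V), f (q, v) = f (q, 0) := by
      intro q v
      have hdiff : Differentiable ℝ (fun v : V => f (q, v)) :=
        (hf.differentiable (by simp)).comp ((differentiable_const q).prodMk differentiable_id)
      refine is_const_of_fderiv_eq_zero hdiff (fun w => ?_) v 0
      have hD : HasFDerivAt (fun v : V => f (q, v))
          ((fderiv ℝ f (q, w)).comp (ContinuousLinearMap.inr ℝ V V)) w :=
        ((hf.differentiable (by simp) (q, w)).hasFDerivAt).comp w (hasFDerivAt_prodMk_right q w)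
      rw [hD.fderiv]
      ext u
      simp only [ContinuousLinearMap.coe_comp', Function.comp_apply,
        ContinuousLinearMap.inr_apply, ContinuousLinearMap.zero_apply]
      exact hf0 (q, w) u
    set h : V → ℝ := fun q => f (q, 0) with hh_def
    have hfun : (fun y : V × V => h y.1) = f := by
      funext y
      exact (hconst y.1 y.2).symm
    have hhdiff : Differentiable ℝ h :=
      (hf.differentiable (by simp)).comp ((differentiable_id).prodMk (differentiable_const (0 : V)))
    have hfderiv : ∀ x : V × V, fderiv ℝ f x = (fderiv ℝ h x.1).comp
        (ContinuousLinearMap.fst ℝ V V) := by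
      intro x
      have : HasFDerivAt f ((fderiv ℝ h x.1).comp (ContinuousLinearMap.fst ℝ V V)) x := by
        rw [← hfun]
        exact ((hhdiff x.1).hasFDerivAt).comp x hasFDerivAt_fst
      exact this.fderiv
    have key2 : ∀ (x : V × V) (a : V), gD L X x (0, a) = fderiv ℝ h x.1 a := by
      intro x a
      rw [← hfd x (a, 0), hfderiv x]
      rfl
    -- derivative of h vanishes
    have hzero : ∀ x : V × V, gD L X x (0, x.2) = 0 := by
      intro x
      have := hstar x
      rw [hsym x] at this
      linarith
    intro x
    refine ContinuousLinearMap.ext fun b => ?_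
    rw [lie_eq_gD hL hX, key2 x b.1]
    have := hzero (x.1, b.1)
    rw [key2 (x.1, b.1) b.1] at this
    simpa using this
  · -- backward
    intro hlie x
    have h0 : gD L X x (0, x.2) = 0 := by
      have := congrFun (congrArg (DFunLike.coe) (hlie x)) (x.2, 0)
      rw [lie_eq_gD hL hX] at this
      simpa using this
    rw [hstar x, h0, zero_add]
end
end

section
/- Let (L, β) be a forced Lagrangian system and X̃ a vector field on TQ such that d(ℒ_{X̃} α_L) = 0. Then X̃ is a dynamical symmetry (i.e., [X̃, ξ_{L,β}] = 0) if and only if d(X̃(E_L)) = −ℒ_{X̃} β. -/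
/- Formalization in the smooth vector-space model: Q is modelled by a real
normed space `V`, so `TQ = V × V` with coordinates `(q, q̇)`.  Vector fields,
1-forms, exterior derivatives, Lie derivatives and brackets are expressed via
the Fréchet derivative `fderiv`. -/

noncomputable section

variable {V : Type*} [NormedAddCommGroup V] [NormedSpace ℝ V]

lemma fderiv_apply_const' {E F G : Type*} [NormedAddCommGroup E] [NormedSpace ℝ E]
    [NormedAddCommGroup F] [NormedSpace ℝ F] [NormedAddCommGroup G] [NormedSpace ℝ G]
    (φ : E → F →L[ℝ] G) {x : E} (hφ : DifferentiableAt ℝ φ x)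
    (b : F) (u : E) : fderiv ℝ (fun y => φ y b) x u = fderiv ℝ φ x u b := by
  have h := fderiv_clm_apply hφ (differentiableAt_const b)
  rw [show (fun y => φ y b) = fun y => φ y ((fun _ : E => b) y) from rfl, h]
  simp

lemma fderiv_apply_fn' {E F G : Type*} [NormedAddCommGroup E] [NormedSpace ℝ E]
    [NormedAddCommGroup F] [NormedSpace ℝ F] [NormedAddCommGroup G] [NormedSpace ℝ G]
    (φ : E → F →L[ℝ] G) (w : E → F) {x : E}
    (hφ : DifferentiableAt ℝ φ x) (hw : DifferentiableAt ℝ w x) (u : E) :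
    fderiv ℝ (fun y => φ y (w y)) x u
      = fderiv ℝ φ x u (w x) + φ x (fderiv ℝ w x u) := by
  rw [fderiv_clm_apply hφ hw]
  simp [add_comm]

set_option maxHeartbeats 1000000 in
lemma keyIdentity
    (L : V × V → ℝ) (hL : ContDiff ℝ (⊤ : ℕ∞) L)
    (β : V × V → (V × V) →L[ℝ] ℝ) (hβ : ContDiff ℝ (⊤ : ℕ∞) β)
    (ξ : V × V → V × V) (hξ : IsForcedEL L β ξ) (hξs : ContDiff ℝ (⊤ : ℕ∞) ξ)
    (Xt : V × V → V × V) (hXt : ContDiff ℝ (⊤ : ℕ∞) Xt)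
    (hclosed : ∀ x a b, extDerivOne (lieDerivOne Xt (alphaL L)) x a b = 0)
    (x b : V × V) :
    omegaL L x (vbracket Xt ξ x) b
      = fderiv ℝ (fun y => fderiv ℝ (energyL L) y (Xt y)) x b
        + lieDerivOne Xt β x b := by
  -- smoothness facts
  have hα : ContDiff ℝ (⊤ : ℕ∞) (alphaL L) :=
    ContDiff.clm_comp (hL.fderiv_right (by simp)) contDiff_const
  have hE : ContDiff ℝ (⊤ : ℕ∞) (energyL L) := by
    have h1 : ContDiff ℝ (⊤ : ℕ∞) (fun x : V × V => fderiv ℝ L x ((0 : V), x.2)) :=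
      (hL.fderiv_right (by simp)).clm_apply (contDiff_const.prodMk contDiff_snd)
    exact h1.sub hL
  have hαd : Differentiable ℝ (alphaL L) := hα.differentiable (by simp)
  have hdα : Differentiable ℝ (fderiv ℝ (alphaL L)) :=
    (hα.fderiv_right (m := (⊤ : ℕ∞)) (by simp)).differentiable (by simp)
  have hEd : Differentiable ℝ (energyL L) := hE.differentiable (by simp)
  have hdE : Differentiable ℝ (fderiv ℝ (energyL L)) :=
    (hE.fderiv_right (m := (⊤ : ℕ∞)) (by simp)).differentiable (by simp)
  have hξd : Differentiable ℝ ξ := hξs.differentiable (by simp)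
  have hXtd : Differentiable ℝ Xt := hXt.differentiable (by simp)
  have hdXt : Differentiable ℝ (fderiv ℝ Xt) :=
    (hXt.fderiv_right (m := (⊤ : ℕ∞)) (by simp)).differentiable (by simp)
  have hβd : Differentiable ℝ β := hβ.differentiable (by simp)
  -- symmetry of second derivatives
  have hA2sym : ∀ v w : V × V,
      fderiv ℝ (fderiv ℝ (alphaL L)) x v w = fderiv ℝ (fderiv ℝ (alphaL L)) x w v :=
    second_derivative_symmetric (fun y => (hαd y).hasFDerivAt) (hdα x).hasFDerivAt
  have hE2sym : ∀ v w : V × V,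
      fderiv ℝ (fderiv ℝ (energyL L)) x v w = fderiv ℝ (fderiv ℝ (energyL L)) x w v :=
    second_derivative_symmetric (fun y => (hEd y).hasFDerivAt) (hdE x).hasFDerivAt
  have hX2sym : ∀ v w : V × V,
      fderiv ℝ (fderiv ℝ Xt) x v w = fderiv ℝ (fderiv ℝ Xt) x w v :=
    second_derivative_symmetric (fun y => (hXtd y).hasFDerivAt) (hdXt x).hasFDerivAt
  -- hξ, pointwise unfolded
  have hxi : ∀ (y c : V × V),
      fderiv ℝ (alphaL L) y c (ξ y) - fderiv ℝ (alphaL L) y (ξ y) c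
        = fderiv ℝ (energyL L) y c + β y c := by
    intro y c
    have h := hξ y c
    unfold omegaL extDerivOne at h
    linarith
  -- Equation (1): differentiate hxi along u := Xt x
  have eq1 :
      fderiv ℝ (fderiv ℝ (alphaL L)) x (Xt x) b (ξ x)
        + fderiv ℝ (alphaL L) x b (fderiv ℝ ξ x (Xt x))
        - (fderiv ℝ (fderiv ℝ (alphaL L)) x (Xt x) (ξ x) b
          + fderiv ℝ (alphaL L) x (fderiv ℝ ξ x (Xt x)) b)
      = fderiv ℝ (fderiv ℝ (energyL L)) x (Xt x) b + fderiv ℝ β x (Xt x) b := by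
    have hfunc : (fun y => fderiv ℝ (alphaL L) y b (ξ y)
        - fderiv ℝ (alphaL L) y (ξ y) b)
        = (fun y => fderiv ℝ (energyL L) y b + β y b) :=
      funext fun y => by rw [hxi y b]
    have dφ1 : DifferentiableAt ℝ (fun y => fderiv ℝ (alphaL L) y b) x :=
      (hdα x).clm_apply (differentiableAt_const b)
    have dφ2 : DifferentiableAt ℝ (fun y => fderiv ℝ (alphaL L) y (ξ y)) x :=
      (hdα x).clm_apply (hξd x)
    have d1 : DifferentiableAt ℝ (fun y => fderiv ℝ (alphaL L) y b (ξ y)) x :=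
      dφ1.clm_apply (hξd x)
    have d2 : DifferentiableAt ℝ (fun y => fderiv ℝ (alphaL L) y (ξ y) b) x :=
      dφ2.clm_apply (differentiableAt_const b)
    have d3 : DifferentiableAt ℝ (fun y => fderiv ℝ (energyL L) y b) x :=
      (hdE x).clm_apply (differentiableAt_const b)
    have d4 : DifferentiableAt ℝ (fun y => β y b) x :=
      (hβd x).clm_apply (differentiableAt_const b)
    have h := congrArg (fun f => fderiv ℝ f x (Xt x)) hfunc
    rw [fderiv_fun_sub d1 d2, fderiv_fun_add d3 d4] at h
    simp only [ContinuousLinearMap.sub_apply, ContinuousLinearMap.add_apply] at h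
    -- expand each piece
    have e1 : fderiv ℝ (fun y => fderiv ℝ (alphaL L) y b (ξ y)) x (Xt x)
        = fderiv ℝ (fderiv ℝ (alphaL L)) x (Xt x) b (ξ x)
          + fderiv ℝ (alphaL L) x b (fderiv ℝ ξ x (Xt x)) := by
      rw [fderiv_apply_fn' _ _ dφ1 (hξd x),
        fderiv_apply_const' _ (hdα x)]
    have e2 : fderiv ℝ (fun y => fderiv ℝ (alphaL L) y (ξ y) b) x (Xt x)
        = fderiv ℝ (fderiv ℝ (alphaL L)) x (Xt x) (ξ x) b
          + fderiv ℝ (alphaL L) x (fderiv ℝ ξ x (Xt x)) b := by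
      rw [fderiv_apply_const' _ dφ2,
        fderiv_apply_fn' _ _ (hdα x) (hξd x)]
      simp [ContinuousLinearMap.add_apply]
    have e3 : fderiv ℝ (fun y => fderiv ℝ (energyL L) y b) x (Xt x)
        = fderiv ℝ (fderiv ℝ (energyL L)) x (Xt x) b :=
      fderiv_apply_const' _ (hdE x) b (Xt x)
    have e4 : fderiv ℝ (fun y => β y b) x (Xt x) = fderiv ℝ β x (Xt x) b :=
      fderiv_apply_const' _ (hβd x) b (Xt x)
    rw [e1, e2, e3, e4] at h
    linarith
  -- expansion of fderiv of the Lie derivative of alphaL along Xt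
  have hγexp : ∀ a c : V × V,
      fderiv ℝ (lieDerivOne Xt (alphaL L)) x a c
        = fderiv ℝ (fderiv ℝ (alphaL L)) x a (Xt x) c
          + fderiv ℝ (alphaL L) x (fderiv ℝ Xt x a) c
          + fderiv ℝ (alphaL L) x a (fderiv ℝ Xt x c)
          + alphaL L x (fderiv ℝ (fderiv ℝ Xt) x a c) := by
    intro a c
    have hγd : DifferentiableAt ℝ (lieDerivOne Xt (alphaL L)) x := by
      unfold lieDerivOne
      exact ((hdα x).clm_apply (hXtd x)).add ((hαd x).clm_comp (hdXt x))
    rw [← fderiv_apply_const' _ hγd c a]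
    have hfun2 : (fun y => lieDerivOne Xt (alphaL L) y c)
        = fun y => fderiv ℝ (alphaL L) y (Xt y) c + alphaL L y (fderiv ℝ Xt y c) := by
      funext y; simp [lieDerivOne]
    rw [hfun2]
    have dφ2 : DifferentiableAt ℝ (fun y => fderiv ℝ (alphaL L) y (Xt y)) x :=
      (hdα x).clm_apply (hXtd x)
    have dw : DifferentiableAt ℝ (fun y => fderiv ℝ Xt y c) x :=
      (hdXt x).clm_apply (differentiableAt_const c)
    have dg1 : DifferentiableAt ℝ (fun y => fderiv ℝ (alphaL L) y (Xt y) c) x :=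
      dφ2.clm_apply (differentiableAt_const c)
    have dg2 : DifferentiableAt ℝ (fun y => alphaL L y (fderiv ℝ Xt y c)) x :=
      (hαd x).clm_apply dw
    rw [fderiv_fun_add dg1 dg2]
    simp only [ContinuousLinearMap.add_apply]
    rw [fderiv_apply_const' _ dφ2, fderiv_apply_fn' _ _ (hdα x) (hXtd x),
      fderiv_apply_fn' _ _ (hαd x) dw, fderiv_apply_const' _ (hdXt x)]
    simp [ContinuousLinearMap.add_apply]
    ring
  -- Equation (3) from closedness with a := ξ x
  have eq3 :
      fderiv ℝ (fderiv ℝ (alphaL L)) x (ξ x) (Xt x) b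
        + fderiv ℝ (alphaL L) x (fderiv ℝ Xt x (ξ x)) b
        + fderiv ℝ (alphaL L) x (ξ x) (fderiv ℝ Xt x b)
      = fderiv ℝ (fderiv ℝ (alphaL L)) x b (Xt x) (ξ x)
        + fderiv ℝ (alphaL L) x (fderiv ℝ Xt x b) (ξ x)
        + fderiv ℝ (alphaL L) x b (fderiv ℝ Xt x (ξ x)) := by
    have h := hclosed x (ξ x) b
    unfold extDerivOne at h
    rw [hγexp (ξ x) b, hγexp b (ξ x)] at h
    have hsym := hX2sym (ξ x) b
    rw [hsym] at h
    linarith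
  -- goal expansion
  have goalL : omegaL L x (vbracket Xt ξ x) b
      = fderiv ℝ (alphaL L) x b (fderiv ℝ ξ x (Xt x))
        - fderiv ℝ (alphaL L) x b (fderiv ℝ Xt x (ξ x))
        - fderiv ℝ (alphaL L) x (fderiv ℝ ξ x (Xt x)) b
        + fderiv ℝ (alphaL L) x (fderiv ℝ Xt x (ξ x)) b := by
    unfold omegaL extDerivOne vbracket
    simp only [map_sub, ContinuousLinearMap.sub_apply]
    ring
  have goalR1 : fderiv ℝ (fun y => fderiv ℝ (energyL L) y (Xt y)) x b
      = fderiv ℝ (fderiv ℝ (energyL L)) x b (Xt x)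
        + fderiv ℝ (energyL L) x (fderiv ℝ Xt x b) :=
    fderiv_apply_fn' _ _ (hdE x) (hXtd x) b
  have goalR2 : lieDerivOne Xt β x b
      = fderiv ℝ β x (Xt x) b + β x (fderiv ℝ Xt x b) := by
    simp [lieDerivOne]
  have hxiDXb := hxi x (fderiv ℝ Xt x b)
  have hE2 := hE2sym (Xt x) b
  have hA2a : fderiv ℝ (fderiv ℝ (alphaL L)) x (Xt x) b (ξ x)
      = fderiv ℝ (fderiv ℝ (alphaL L)) x b (Xt x) (ξ x) := by
    rw [hA2sym]
  have hA2b : fderiv ℝ (fderiv ℝ (alphaL L)) x (Xt x) (ξ x) b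
      = fderiv ℝ (fderiv ℝ (alphaL L)) x (ξ x) (Xt x) b := by
    rw [hA2sym]
  rw [goalL, goalR1, goalR2]
  linarith

/-- If `d(ℒ_{X̃} α_L) = 0`, then `X̃` is a dynamical symmetry
(`[X̃, ξ_{L,β}] = 0`) iff `d(X̃(E_L)) = −ℒ_{X̃} β`. -/
theorem dynamical_symmetry_characterization
    (L : V × V → ℝ) (hL : ContDiff ℝ (⊤ : ℕ∞) L) (hreg : RegularLag L)
    (β : V × V → (V × V) →L[ℝ] ℝ) (hβ : ContDiff ℝ (⊤ : ℕ∞) β) (hsb : SemibasicTQ β)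
    (ξ : V × V → V × V) (hξ : IsForcedEL L β ξ) (hξs : ContDiff ℝ (⊤ : ℕ∞) ξ)
    (Xt : V × V → V × V) (hXt : ContDiff ℝ (⊤ : ℕ∞) Xt)
    (hclosed : ∀ x a b, extDerivOne (lieDerivOne Xt (alphaL L)) x a b = 0) :
    (∀ x, vbracket Xt ξ x = 0) ↔
      (∀ x v, fderiv ℝ (fun y => fderiv ℝ (energyL L) y (Xt y)) x v =
        -(lieDerivOne Xt β x v)) := by
  constructor
  · intro hb x v
    have hk := keyIdentity L hL β hβ ξ hξ hξs Xt hXt hclosed x v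
    rw [hb x] at hk
    have h0 : omegaL L x 0 v = 0 := by
      simp [omegaL, extDerivOne]
    rw [h0] at hk
    linarith
  · intro h x
    apply hreg x
    intro b
    have hk := keyIdentity L hL β hβ ξ hξ hξs Xt hXt hclosed x b
    rw [hk, h x b]
    ring
end
end

section
/- Let (L, β) be a forced Lagrangian system and X̃ a Cartan symmetry (i.e., X̃(E_L) + β(X̃) = 0 and ℒ_{X̃} α_L = df for some function f). Then X̃ is a dynamical symmetry (i.e., [X̃, ξ_{L,β}] = 0) if and only if ι_{X̃} dβ = 0. -/
/- Formalization in the smooth vector-space model: Q is modelled by a real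
normed space `V`, so `TQ = V × V` with coordinates `(q, q̇)`.  Vector fields,
1-forms, exterior derivatives, Lie derivatives and brackets are expressed via
the Fréchet derivative `fderiv`. -/

noncomputable section

variable {V : Type*} [NormedAddCommGroup V] [NormedSpace ℝ V]

section Helpers

variable {E F : Type*} [NormedAddCommGroup E] [NormedSpace ℝ E]
  [NormedAddCommGroup F] [NormedSpace ℝ F]

lemma fderiv_apply_const'_s7 {A : E → E →L[ℝ] F} {x : E}
    (hA : DifferentiableAt ℝ A x) (v a : E) :
    fderiv ℝ (fun y => A y v) x a = fderiv ℝ A x a v := by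
  rw [fderiv_clm_apply hA (differentiableAt_const v)]
  simp

lemma fderiv_eval' {A : E → E →L[ℝ] F} {u : E → E} {x : E}
    (hA : DifferentiableAt ℝ A x) (hu : DifferentiableAt ℝ u x) (a : E) :
    fderiv ℝ (fun y => A y (u y)) x a
      = A x (fderiv ℝ u x a) + fderiv ℝ A x a (u x) := by
  rw [fderiv_clm_apply hA hu]
  simp

lemma fderiv_eval2' {A : E → E →L[ℝ] E →L[ℝ] F} {u : E → E} {x : E}
    (hA : DifferentiableAt ℝ A x) (hu : DifferentiableAt ℝ u x) (v a : E) :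
    fderiv ℝ (fun y => A y (u y) v) x a
      = A x (fderiv ℝ u x a) v + fderiv ℝ A x a (u x) v := by
  have h := hA.hasFDerivAt.clm_apply hu.hasFDerivAt
  have h2 := h.clm_apply (hasFDerivAt_const v x)
  rw [h2.fderiv]
  simp

lemma sndSymm' {f : E → F} (hf : ContDiff ℝ (⊤ : ℕ∞) f) (x p q : E) :
    fderiv ℝ (fderiv ℝ f) x p q = fderiv ℝ (fderiv ℝ f) x q p :=
  (hf.contDiffAt.isSymmSndFDerivAt (by rw [minSmoothness_of_isRCLikeNormedField]; exact WithTop.coe_le_coe.mpr le_top)) p q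

end Helpers

lemma contDiff_alphaL' {L : V × V → ℝ} (hL : ContDiff ℝ (⊤ : ℕ∞) L) :
    ContDiff ℝ (⊤ : ℕ∞) (alphaL L) :=
  (hL.fderiv_right (by simp)).clm_comp contDiff_const

lemma contDiff_energyL' {L : V × V → ℝ} (hL : ContDiff ℝ (⊤ : ℕ∞) L) :
    ContDiff ℝ (⊤ : ℕ∞) (energyL L) := by
  unfold energyL
  exact ((hL.fderiv_right (by simp)).clm_apply
    (contDiff_const.prodMk contDiff_snd)).sub hL

set_option maxHeartbeats 2000000 in
lemma cartan_key
    (L : V × V → ℝ) (hL : ContDiff ℝ (⊤ : ℕ∞) L)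
    (β : V × V → (V × V) →L[ℝ] ℝ) (hβ : ContDiff ℝ (⊤ : ℕ∞) β)
    (ξ : V × V → V × V) (hξ : IsForcedEL L β ξ) (hξs : ContDiff ℝ (⊤ : ℕ∞) ξ)
    (Xt : V × V → V × V) (hXt : ContDiff ℝ (⊤ : ℕ∞) Xt)
    (hcar : ∀ x, fderiv ℝ (energyL L) x (Xt x) + β x (Xt x) = 0)
    (f : V × V → ℝ) (hf : ContDiff ℝ (⊤ : ℕ∞) f)
    (hlie : ∀ x, lieDerivOne Xt (alphaL L) x = fderiv ℝ f x)
    (x b : V × V) :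
    omegaL L x (vbracket Xt ξ x) b = extDerivOne β x (Xt x) b := by
  have hα : ContDiff ℝ (⊤ : ℕ∞) (alphaL L) := contDiff_alphaL' hL
  have hE : ContDiff ℝ (⊤ : ℕ∞) (energyL L) := contDiff_energyL' hL
  have hαd : Differentiable ℝ (alphaL L) := hα.differentiable (by simp)
  have hDα : Differentiable ℝ (fderiv ℝ (alphaL L)) :=
    (hα.fderiv_right (m := (⊤ : ℕ∞)) (by simp)).differentiable (by simp)
  have hDE : Differentiable ℝ (fderiv ℝ (energyL L)) :=
    (hE.fderiv_right (m := (⊤ : ℕ∞)) (by simp)).differentiable (by simp)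
  have hDXt : Differentiable ℝ (fderiv ℝ Xt) :=
    (hXt.fderiv_right (m := (⊤ : ℕ∞)) (by simp)).differentiable (by simp)
  have hDf : Differentiable ℝ (fderiv ℝ f) :=
    (hf.fderiv_right (m := (⊤ : ℕ∞)) (by simp)).differentiable (by simp)
  have hβd : Differentiable ℝ β := hβ.differentiable (by simp)
  have hξd : Differentiable ℝ ξ := hξs.differentiable (by simp)
  have hXtd : Differentiable ℝ Xt := hXt.differentiable (by simp)
  -- scalar form of the forced Euler–Lagrange equation
  have hFEL : ∀ y c, fderiv ℝ (alphaL L) y c (ξ y)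
      = fderiv ℝ (alphaL L) y (ξ y) c
        + (fderiv ℝ (energyL L) y c + β y c) := by
    intro y c
    have h := hξ y c
    simp only [omegaL, extDerivOne] at h
    linarith
  set a := Xt x with ha
  -- Equation I : differentiate the EL equation along Xt
  have d1 : DifferentiableAt ℝ (fun y => fderiv ℝ (alphaL L) y (ξ y) b) x :=
    ((hDα x).clm_apply (hξd x)).clm_apply (differentiableAt_const b)
  have d2 : DifferentiableAt ℝ (fun y => fderiv ℝ (energyL L) y b) x :=
    (hDE x).clm_apply (differentiableAt_const b)
  have d3 : DifferentiableAt ℝ (fun y => β y b) x :=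
    (hβd x).clm_apply (differentiableAt_const b)
  have eqI : fderiv ℝ (alphaL L) x b (fderiv ℝ ξ x a)
        + fderiv ℝ (fderiv ℝ (alphaL L)) x a b (ξ x)
      = (fderiv ℝ (alphaL L) x (fderiv ℝ ξ x a) b
          + fderiv ℝ (fderiv ℝ (alphaL L)) x a (ξ x) b)
        + (fderiv ℝ (fderiv ℝ (energyL L)) x a b + fderiv ℝ β x a b) := by
    have hfun : (fun y => fderiv ℝ (alphaL L) y b (ξ y))
        = fun y => fderiv ℝ (alphaL L) y (ξ y) b
            + (fderiv ℝ (energyL L) y b + β y b) :=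
      funext fun y => hFEL y b
    have hc : DifferentiableAt ℝ (fun y => fderiv ℝ (alphaL L) y b) x :=
      (hDα x).clm_apply (differentiableAt_const b)
    have e : fderiv ℝ (fun y => fderiv ℝ (alphaL L) y b (ξ y)) x a
        = fderiv ℝ (fun y => fderiv ℝ (alphaL L) y (ξ y) b
            + (fderiv ℝ (energyL L) y b + β y b)) x a := by rw [hfun]
    rw [fderiv_eval' hc (hξd x) a, fderiv_apply_const'_s7 (hDα x) b a] at e
    rw [fderiv_fun_add d1 (d2.fun_add d3)] at e
    simp only [ContinuousLinearMap.add_apply] at e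
    rw [fderiv_fun_add d2 d3] at e
    simp only [ContinuousLinearMap.add_apply] at e
    rw [fderiv_eval2' (hDα x) (hξd x) b a,
      fderiv_apply_const'_s7 (hDE x) b a, fderiv_apply_const'_s7 (hβd x) b a] at e
    linarith [e]
  -- Equation II : differentiate the Cartan condition along b
  have dEX : DifferentiableAt ℝ (fun y => fderiv ℝ (energyL L) y (Xt y)) x :=
    (hDE x).clm_apply (hXtd x)
  have dβX : DifferentiableAt ℝ (fun y => β y (Xt y)) x :=
    (hβd x).clm_apply (hXtd x)
  have eqII : (fderiv ℝ (energyL L) x (fderiv ℝ Xt x b)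
        + fderiv ℝ (fderiv ℝ (energyL L)) x b a)
      + (β x (fderiv ℝ Xt x b) + fderiv ℝ β x b a) = 0 := by
    have hfun2 : (fun y => fderiv ℝ (energyL L) y (Xt y) + β y (Xt y))
        = fun _ => (0 : ℝ) := funext hcar
    have e : fderiv ℝ (fun y => fderiv ℝ (energyL L) y (Xt y) + β y (Xt y)) x b
        = 0 := by rw [hfun2]; simp
    rw [fderiv_fun_add dEX dβX] at e
    simp only [ContinuousLinearMap.add_apply] at e
    rw [fderiv_eval' (hDE x) (hXtd x) b, fderiv_eval' (hβd x) (hXtd x) b] at e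
    rw [← ha] at e
    linarith [e]
  -- Equation III : differentiate the Cartan exactness condition
  have hlie' : ∀ y v, fderiv ℝ (alphaL L) y (Xt y) v
      + alphaL L y (fderiv ℝ Xt y v) = fderiv ℝ f y v := by
    intro y v
    have h := DFunLike.congr_fun (hlie y) v
    simpa [lieDerivOne] using h
  have eqIII : ∀ c v, fderiv ℝ (alphaL L) x (fderiv ℝ Xt x c) v
        + fderiv ℝ (fderiv ℝ (alphaL L)) x c a v
      = fderiv ℝ (fderiv ℝ f) x c v
        - (alphaL L x (fderiv ℝ (fderiv ℝ Xt) x c v)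
            + fderiv ℝ (alphaL L) x c (fderiv ℝ Xt x v)) := by
    intro c v
    have hfun3 : (fun y => fderiv ℝ (alphaL L) y (Xt y) v)
        = fun y => fderiv ℝ f y v - alphaL L y (fderiv ℝ Xt y v) :=
      funext fun y => by have := hlie' y v; linarith
    have dDf : DifferentiableAt ℝ (fun y => fderiv ℝ f y v) x :=
      (hDf x).clm_apply (differentiableAt_const v)
    have duv : DifferentiableAt ℝ (fun y => fderiv ℝ Xt y v) x :=
      (hDXt x).clm_apply (differentiableAt_const v)
    have dαu : DifferentiableAt ℝ (fun y => alphaL L y (fderiv ℝ Xt y v)) x :=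
      (hαd x).clm_apply duv
    have e : fderiv ℝ (fun y => fderiv ℝ (alphaL L) y (Xt y) v) x c
        = fderiv ℝ (fun y => fderiv ℝ f y v
            - alphaL L y (fderiv ℝ Xt y v)) x c := by rw [hfun3]
    rw [fderiv_eval2' (hDα x) (hXtd x) v c] at e
    rw [fderiv_fun_sub dDf dαu] at e
    simp only [ContinuousLinearMap.sub_apply] at e
    rw [fderiv_apply_const'_s7 (hDf x) v c] at e
    rw [fderiv_eval' (hαd x) duv c, fderiv_apply_const'_s7 (hDXt x) v c] at e
    rw [← ha] at e
    linarith [e]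
  -- symmetry of second derivatives
  have S1 : fderiv ℝ (fderiv ℝ (alphaL L)) x a b (ξ x)
      = fderiv ℝ (fderiv ℝ (alphaL L)) x b a (ξ x) := by
    rw [sndSymm' hα x a b]
  have S2 : fderiv ℝ (fderiv ℝ (alphaL L)) x a (ξ x) b
      = fderiv ℝ (fderiv ℝ (alphaL L)) x (ξ x) a b := by
    rw [sndSymm' hα x a (ξ x)]
  have S3 : alphaL L x (fderiv ℝ (fderiv ℝ Xt) x b (ξ x))
      = alphaL L x (fderiv ℝ (fderiv ℝ Xt) x (ξ x) b) := by
    rw [sndSymm' hXt x b (ξ x)]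
  have S4 : fderiv ℝ (fderiv ℝ f) x b (ξ x)
      = fderiv ℝ (fderiv ℝ f) x (ξ x) b := sndSymm' hf x b (ξ x)
  have S5 : fderiv ℝ (fderiv ℝ (energyL L)) x a b
      = fderiv ℝ (fderiv ℝ (energyL L)) x b a := sndSymm' hE x a b
  have E3 := eqIII b (ξ x)
  have E4 := eqIII (ξ x) b
  have E5 := hFEL x (fderiv ℝ Xt x b)
  simp only [omegaL, extDerivOne, vbracket, map_sub,
    ContinuousLinearMap.sub_apply]
  linear_combination eqI + eqII - E3 + E4 + E5 - S1 + S2 + S3 - S4 + S5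

/-- A Cartan symmetry is a dynamical symmetry iff `ι_{X̃} dβ = 0`. -/
theorem cartan_symmetry_is_dynamical_iff
    (L : V × V → ℝ) (hL : ContDiff ℝ (⊤ : ℕ∞) L) (hreg : RegularLag L)
    (β : V × V → (V × V) →L[ℝ] ℝ) (hβ : ContDiff ℝ (⊤ : ℕ∞) β) (hsb : SemibasicTQ β)
    (ξ : V × V → V × V) (hξ : IsForcedEL L β ξ) (hξs : ContDiff ℝ (⊤ : ℕ∞) ξ)
    (Xt : V × V → V × V) (hXt : ContDiff ℝ (⊤ : ℕ∞) Xt)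
    -- X̃ is a Cartan symmetry:
    (hcar : ∀ x, fderiv ℝ (energyL L) x (Xt x) + β x (Xt x) = 0)
    (hexact : ∃ f : V × V → ℝ, ContDiff ℝ (⊤ : ℕ∞) f ∧
      ∀ x, lieDerivOne Xt (alphaL L) x = fderiv ℝ f x) :
    (∀ x, vbracket Xt ξ x = 0) ↔
      (∀ x v, extDerivOne β x (Xt x) v = 0) := by
  obtain ⟨f, hf, hlie⟩ := hexact
  constructor
  · intro hdyn x v
    have h := cartan_key L hL β hβ ξ hξ hξs Xt hXt hcar f hf hlie x v
    rw [hdyn x] at h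
    simpa [omegaL, extDerivOne] using h.symm
  · intro h0 x
    apply hreg x
    intro c
    rw [cartan_key L hL β hβ ξ hξ hξs Xt hXt hcar f hf hlie x c, h0 x c]
end
end

section
/- Let (L, β) be a forced Lagrangian system and X̃ a vector field on TQ with ℒ_{X̃} α_L = df for some function f : TQ → ℝ. Then X̃ is a Cartan symmetry (i.e., X̃(E_L) + β(X̃) = 0) if and only if f − (S X̃)(L) is a constant of the motion of ξ_{L,β}. -/
/- Formalization in the smooth vector-space model: Q is modelled by a real
normed space `V`, so `TQ = V × V` with coordinates `(q, q̇)`.  Vector fields,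
1-forms, exterior derivatives, Lie derivatives and brackets are expressed via
the Fréchet derivative `fderiv`. -/

noncomputable section

variable {V : Type*} [NormedAddCommGroup V] [NormedSpace ℝ V]

/-- If `ℒ_{X̃} α_L = df`, then `X̃` is a Cartan symmetry
(`X̃(E_L) + β(X̃) = 0`) iff `f − (S X̃)(L)` is a constant of the motion. -/
theorem cartan_symmetry_iff_conserved
    (L : V × V → ℝ) (hL : ContDiff ℝ (⊤ : ℕ∞) L) (hreg : RegularLag L)
    (β : V × V → (V × V) →L[ℝ] ℝ) (hβ : ContDiff ℝ (⊤ : ℕ∞) β) (hsb : SemibasicTQ β)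
    (ξ : V × V → V × V) (hξ : IsForcedEL L β ξ) (hξs : ContDiff ℝ (⊤ : ℕ∞) ξ)
    (Xt : V × V → V × V) (hXt : ContDiff ℝ (⊤ : ℕ∞) Xt)
    (f : V × V → ℝ) (hf : ContDiff ℝ (⊤ : ℕ∞) f)
    (hlie : ∀ x, lieDerivOne Xt (alphaL L) x = fderiv ℝ f x) :
    (∀ x, fderiv ℝ (energyL L) x (Xt x) + β x (Xt x) = 0) ↔
      (∀ x, fderiv ℝ (fun y => f y - fderiv ℝ L y (vertEndo V (Xt y))) x (ξ x) = 0) := by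
  have key : ∀ x, fderiv ℝ (fun y => f y - fderiv ℝ L y (vertEndo V (Xt y))) x (ξ x)
      = fderiv ℝ (energyL L) x (Xt x) + β x (Xt x) := by
    intro x
    have hc : ContDiff ℝ (⊤ : ℕ∞) (fderiv ℝ L) := hL.fderiv_right (by simp)
    have hc' : DifferentiableAt ℝ (fderiv ℝ L) x := (hc.differentiable (by simp)) x
    have hXt' : DifferentiableAt ℝ Xt x := (hXt.differentiable (by simp)) x
    have hu : HasFDerivAt (fun y => vertEndo V (Xt y))
        ((vertEndo V).comp (fderiv ℝ Xt x)) x :=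
      ((vertEndo V).hasFDerivAt).comp x hXt'.hasFDerivAt
    have hfdiff : DifferentiableAt ℝ f x := (hf.differentiable (by simp)) x
    have hhdiff : DifferentiableAt ℝ (fun y => fderiv ℝ L y (vertEndo V (Xt y))) x :=
      hc'.clm_apply hu.differentiableAt
    have hh : fderiv ℝ (fun y => fderiv ℝ L y (vertEndo V (Xt y))) x
        = (fderiv ℝ (fderiv ℝ L) x).flip (vertEndo V (Xt x))
          + (fderiv ℝ L x).comp ((vertEndo V).comp (fderiv ℝ Xt x)) := by
      rw [fderiv_clm_apply hc' hu.differentiableAt, hu.fderiv]; abel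
    set Φ : ((V × V) →L[ℝ] ℝ) →L[ℝ] ((V × V) →L[ℝ] ℝ) :=
      (ContinuousLinearMap.compL ℝ (V × V) (V × V) ℝ).flip (vertEndo V) with hΦ
    have hαfun : (fun y => Φ (fderiv ℝ L y)) = alphaL L := by
      funext y; simp [hΦ, alphaL]
    have hα : fderiv ℝ (alphaL L) x = Φ.comp (fderiv ℝ (fderiv ℝ L) x) := by
      rw [← hαfun]
      exact (Φ.hasFDerivAt.comp x hc'.hasFDerivAt).fderiv
    have hfd : fderiv ℝ f x
        = fderiv ℝ (alphaL L) x (Xt x) + (alphaL L x).comp (fderiv ℝ Xt x) :=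
      (hlie x).symm
    have hEL : fderiv ℝ (energyL L) x (Xt x) + β x (Xt x)
        = extDerivOne (alphaL L) x (Xt x) (ξ x) := by
      have h := hξ x (Xt x)
      simp only [omegaL, extDerivOne] at h ⊢
      linarith
    rw [fderiv_fun_sub hfdiff hhdiff, hEL]
    simp only [ContinuousLinearMap.sub_apply, hh, hfd, hα, extDerivOne,
      ContinuousLinearMap.add_apply, ContinuousLinearMap.comp_apply,
      ContinuousLinearMap.flip_apply, hΦ, ContinuousLinearMap.compL_apply, alphaL]
    ring
  constructor
  · intro h x; rw [key x, h x]
  · intro h x; rw [← key x, h x]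
end
end

section
/- Let (L, R̄) be a forced Lagrangian system with Rayleigh force R̄ = S*(dℛ) for a dissipation function ℛ : TQ → ℝ, and let X be a vector field on Q. Then X^c(L) = X^v(ℛ) if and only if X^v(L) is a constant of the motion of ξ_{L,R̄}. -/
/- Formalization in the smooth vector-space model: Q is modelled by a real
normed space `V`, so `TQ = V × V` with coordinates `(q, q̇)`.  Vector fields,
1-forms, exterior derivatives, Lie derivatives and brackets are expressed via
the Fréchet derivative `fderiv`. -/

noncomputable section

variable {V : Type*} [NormedAddCommGroup V] [NormedSpace ℝ V]

/-- The Rayleigh force `R̄ = S*(dℛ)` of a dissipation function `ℛ`. -/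
def rayleighForce (R : V × V → ℝ) (x : V × V) : (V × V) →L[ℝ] ℝ :=
  (fderiv ℝ R x).comp (vertEndo V)


/- Auxiliary lemmas -/

lemma hasFDerivAt_L (L : V × V → ℝ) (hL : ContDiff ℝ (⊤ : ℕ∞) L) (y : V × V) :
    HasFDerivAt L (fderiv ℝ L y) y := (hL.differentiable (by simp) y).hasFDerivAt

lemma hasFDerivAt_L' (L : V × V → ℝ) (hL : ContDiff ℝ (⊤ : ℕ∞) L) (x : V × V) :
    HasFDerivAt (fderiv ℝ L) (fderiv ℝ (fderiv ℝ L) x) x :=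
  (((hL.fderiv_right (m := 1) (by exact WithTop.coe_le_coe.mpr le_top)).differentiable one_ne_zero) x).hasFDerivAt

lemma omegaL_eq (L : V × V → ℝ) (hL : ContDiff ℝ (⊤ : ℕ∞) L) (x a b : V × V) :
    omegaL L x a b =
      fderiv ℝ (fderiv ℝ L) x b (0, a.1) - fderiv ℝ (fderiv ℝ L) x a (0, b.1) := by
  set g : ((V × V) →L[ℝ] ℝ) →L[ℝ] ((V × V) →L[ℝ] ℝ) :=
    (ContinuousLinearMap.compL ℝ (V × V) (V × V) ℝ).flip (vertEndo V) with hg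
  have halpha : HasFDerivAt (alphaL L) (g.comp (fderiv ℝ (fderiv ℝ L) x)) x := by
    have : alphaL L = g ∘ (fderiv ℝ L) := rfl
    rw [this]
    exact g.hasFDerivAt.comp x (hasFDerivAt_L' L hL x)
  have happ : ∀ u v : V × V, fderiv ℝ (alphaL L) x u v
      = fderiv ℝ (fderiv ℝ L) x u (0, v.1) := by
    intro u v
    rw [halpha.fderiv]
    rfl
  simp only [omegaL, extDerivOne, happ]
  ring

lemma fderiv_energyL (L : V × V → ℝ) (hL : ContDiff ℝ (⊤ : ℕ∞) L) (x b : V × V) :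
    fderiv ℝ (energyL L) x b =
      fderiv ℝ L x (0, b.2) + fderiv ℝ (fderiv ℝ L) x b (0, x.2) - fderiv ℝ L x b := by
  set D : (V × V) →L[ℝ] V × V :=
    (ContinuousLinearMap.inr ℝ V V).comp (ContinuousLinearMap.snd ℝ V V) with hD
  have h1 : HasFDerivAt (fun y : V × V => fderiv ℝ L y ((0 : V), y.2))
      ((fderiv ℝ L x).comp D + (fderiv ℝ (fderiv ℝ L) x).flip ((0 : V), x.2)) x :=
    (hasFDerivAt_L' L hL x).clm_apply D.hasFDerivAt
  have h2 : HasFDerivAt (energyL L)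
      ((fderiv ℝ L x).comp D + (fderiv ℝ (fderiv ℝ L) x).flip ((0 : V), x.2)
        - fderiv ℝ L x) x := h1.sub (hasFDerivAt_L L hL x)
  rw [h2.fderiv]
  rfl

lemma fderiv_momentum (L : V × V → ℝ) (hL : ContDiff ℝ (⊤ : ℕ∞) L)
    (X : V → V) (hX : ContDiff ℝ (⊤ : ℕ∞) X) (x b : V × V) :
    fderiv ℝ (fun y => fderiv ℝ L y (vlift X y)) x b =
      fderiv ℝ L x (0, fderiv ℝ X x.1 b.1)
        + fderiv ℝ (fderiv ℝ L) x b (0, X x.1) := by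
  set D : (V × V) →L[ℝ] V × V :=
    (ContinuousLinearMap.inr ℝ V V).comp
      ((fderiv ℝ X x.1).comp (ContinuousLinearMap.fst ℝ V V)) with hD
  have hu : HasFDerivAt (fun y : V × V => ((0 : V), X y.1)) D x := by
    have h1 : HasFDerivAt (fun y : V × V => X y.1)
        ((fderiv ℝ X x.1).comp (ContinuousLinearMap.fst ℝ V V)) x :=
      ((hX.differentiable (by simp) x.1).hasFDerivAt).comp x hasFDerivAt_fst
    exact ((ContinuousLinearMap.inr ℝ V V).hasFDerivAt).comp x h1
  have h : HasFDerivAt (fun y => fderiv ℝ L y (vlift X y))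
      ((fderiv ℝ L x).comp D + (fderiv ℝ (fderiv ℝ L) x).flip ((0 : V), X x.1)) x :=
    (hasFDerivAt_L' L hL x).clm_apply hu
  rw [h.fderiv]
  rfl

/-- A forced Euler-Lagrange vector field of a regular Lagrangian is a SODE. -/
lemma sode (L : V × V → ℝ) (hL : ContDiff ℝ (⊤ : ℕ∞) L) (hreg : RegularLag L)
    (R : V × V → ℝ) (ξ : V × V → V × V) (hξ : IsForcedEL L (rayleighForce R) ξ)
    (x : V × V) : (ξ x).1 = x.2 := by
  have symm := second_derivative_symmetric (hasFDerivAt_L L hL) (hasFDerivAt_L' L hL x)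
  have hray : ∀ b : V × V, rayleighForce R x b = fderiv ℝ R x ((0 : V), b.1) :=
    fun b => rfl
  have key : ∀ w : V,
      fderiv ℝ (fderiv ℝ L) x ((0 : V), w) ((0 : V), (ξ x).1 - x.2) = 0 := by
    intro w
    have h := hξ x ((0 : V), w)
    rw [omegaL_eq L hL, fderiv_energyL L hL, hray] at h
    have hz : (((0 : V), (0 : V)) : V × V) = 0 := rfl
    simp only [hz, map_zero] at h
    have hsplit : (((0 : V), (ξ x).1 - x.2) : V × V)
        = ((0 : V), (ξ x).1) - ((0 : V), x.2) := by
      simp [Prod.ext_iff]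
    rw [hsplit, map_sub]
    linarith
  have ha : (((0 : V), (ξ x).1 - x.2) : V × V) = 0 := by
    apply hreg x
    intro b
    rw [omegaL_eq L hL]
    have h1 : fderiv ℝ (fderiv ℝ L) x b ((0 : V),
        (((0 : V), (ξ x).1 - x.2) : V × V).1) = 0 := by
      have : ((0 : V), (((0 : V), (ξ x).1 - x.2) : V × V).1) = (0 : V × V) := rfl
      rw [this, map_zero]
    rw [h1, symm]
    rw [key b.1]
    ring
  have := congrArg Prod.snd ha
  simpa [sub_eq_zero] using this

/-- Key identity: `ξ(X^v(L)) = X^c(L) - X^v(R)`. -/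
lemma key_identity (L : V × V → ℝ) (hL : ContDiff ℝ (⊤ : ℕ∞) L) (hreg : RegularLag L)
    (R : V × V → ℝ) (ξ : V × V → V × V) (hξ : IsForcedEL L (rayleighForce R) ξ)
    (X : V → V) (hX : ContDiff ℝ (⊤ : ℕ∞) X) (x : V × V) :
    fderiv ℝ (fun y => fderiv ℝ L y (vlift X y)) x (ξ x) =
      fderiv ℝ L x (clift X x) - fderiv ℝ R x (vlift X x) := by
  have hs := sode L hL hreg R ξ hξ x
  have hray : ∀ b : V × V, rayleighForce R x b = fderiv ℝ R x ((0 : V), b.1) :=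
    fun b => rfl
  have h := hξ x (clift X x)
  rw [omegaL_eq L hL, fderiv_energyL L hL, hray] at h
  rw [fderiv_momentum L hL X hX x]
  simp only [clift, vlift] at h ⊢
  rw [hs] at h ⊢
  linarith

/-- Noether's theorem for Rayleigh dissipation: `X^c(L) = X^v(ℛ)` iff
`X^v(L)` is a constant of the motion of `ξ_{L,R̄}`. -/
theorem noether_rayleigh
    (L : V × V → ℝ) (hL : ContDiff ℝ (⊤ : ℕ∞) L) (hreg : RegularLag L)
    (R : V × V → ℝ) (hR : ContDiff ℝ (⊤ : ℕ∞) R)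
    (ξ : V × V → V × V) (hξ : IsForcedEL L (rayleighForce R) ξ)
    (hξs : ContDiff ℝ (⊤ : ℕ∞) ξ)
    (X : V → V) (hX : ContDiff ℝ (⊤ : ℕ∞) X) :
    (∀ x, fderiv ℝ L x (clift X x) = fderiv ℝ R x (vlift X x)) ↔
      (∀ x, fderiv ℝ (fun y => fderiv ℝ L y (vlift X y)) x (ξ x) = 0) := by
  constructor
  · intro h x
    rw [key_identity L hL hreg R ξ hξ X hX x, h x, sub_self]
  · intro h x
    have hk := key_identity L hL hreg R ξ hξ X hX x
    rw [h x] at hk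
    linarith
end
end

section
/- Let G be a Lie group acting freely and properly on Q with G-invariant regular Lagrangian L and semibasic external force β. For each ξ in the Lie subalgebra 𝔤_β = {ξ ∈ 𝔤 : β(ξ_Q^c) = 0 and ι_{ξ_Q^c} dβ = 0}, the vector field ξ_Q is a Noether symmetry of (L, β) (i.e., ξ_Q^c(E_L) + β(ξ_Q^c) = 0 and ℒ_{ξ_Q^c} α_L is exact) and a symmetry of the forced Lagrangian system (i.e., ξ_Q^c(L) = β(ξ_Q^c)). In particular, ξ_Q^c(E_L) = 0, i.e. the energy E_L is G-invariant. -/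
/- Formalization in the smooth vector-space model: Q is modelled by a real
normed space `V`, so `TQ = V × V` with coordinates `(q, q̇)`.  Vector fields,
1-forms, exterior derivatives, Lie derivatives and brackets are expressed via
the Fréchet derivative `fderiv`. -/

noncomputable section

variable {V : Type*} [NormedAddCommGroup V] [NormedSpace ℝ V]

section Aux

variable {V : Type*} [NormedAddCommGroup V] [NormedSpace ℝ V]

lemma clift_hasFDeriv (Y : V → V) (hY : ContDiff ℝ (⊤ : ℕ∞) Y) (x : V × V) :
    HasFDerivAt (clift Y)
      (((fderiv ℝ Y x.1).comp (ContinuousLinearMap.fst ℝ V V)).prod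
        ((fderiv ℝ Y x.1).comp (ContinuousLinearMap.snd ℝ V V) +
          ((fderiv ℝ (fderiv ℝ Y) x.1).comp (ContinuousLinearMap.fst ℝ V V)).flip x.2)) x := by
  have hB : ContDiff ℝ (⊤ : ℕ∞) (fderiv ℝ Y) := hY.fderiv_right (by simp)
  have h1 : HasFDerivAt (fun p : V × V => Y p.1)
      ((fderiv ℝ Y x.1).comp (ContinuousLinearMap.fst ℝ V V)) x :=
    ((hY.differentiable (by simp) x.1).hasFDerivAt).comp x (hasFDerivAt_fst)
  have h2 : HasFDerivAt (fun p : V × V => fderiv ℝ Y p.1)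
      ((fderiv ℝ (fderiv ℝ Y) x.1).comp (ContinuousLinearMap.fst ℝ V V)) x :=
    ((hB.differentiable (by simp) x.1).hasFDerivAt).comp x (hasFDerivAt_fst)
  have h3 := h2.clm_apply (hasFDerivAt_snd)
  exact HasFDerivAt.prodMk h1 h3

lemma clift_fderiv_fst (Y : V → V) (hY : ContDiff ℝ (⊤ : ℕ∞) Y) (x w : V × V) :
    (fderiv ℝ (clift Y) x w).1 = fderiv ℝ Y x.1 w.1 := by
  rw [(clift_hasFDeriv Y hY x).fderiv]; simp

lemma clift_fderiv_vert (Y : V → V) (hY : ContDiff ℝ (⊤ : ℕ∞) Y) (x : V × V) (b : V) :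
    fderiv ℝ (clift Y) x (0, b) = (0, fderiv ℝ Y x.1 b) := by
  rw [(clift_hasFDeriv Y hY x).fderiv]; simp

lemma key_lemma (L : V × V → ℝ) (hL : ContDiff ℝ (⊤ : ℕ∞) L) (c : V × V → V × V)
    (hc : Differentiable ℝ c) (h : ∀ x, fderiv ℝ L x (c x) = 0) (x u : V × V) :
    fderiv ℝ (fderiv ℝ L) x u (c x) + fderiv ℝ L x (fderiv ℝ c x u) = 0 := by
  have hL' : ContDiff ℝ (⊤ : ℕ∞) (fderiv ℝ L) := hL.fderiv_right (by simp)
  have hg : HasFDerivAt (fun y => fderiv ℝ L y (c y))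
      ((fderiv ℝ L x).comp (fderiv ℝ c x) + (fderiv ℝ (fderiv ℝ L) x).flip (c x)) x :=
    ((hL'.differentiable (by simp) x).hasFDerivAt).clm_apply (hc x).hasFDerivAt
  rw [show (fun y => fderiv ℝ L y (c y)) = fun _ => (0:ℝ) from funext h] at hg
  have h1 := hg.unique (hasFDerivAt_const 0 x)
  have h2 := congrArg (fun T => T u) h1
  simp only [ContinuousLinearMap.add_apply, ContinuousLinearMap.coe_comp',
    Function.comp_apply, ContinuousLinearMap.flip_apply, ContinuousLinearMap.zero_apply] at h2
  linarith

lemma alphaL_apply (L : V × V → ℝ) (x u : V × V) :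
    alphaL L x u = fderiv ℝ L x (0, u.1) := by
  simp [alphaL, vertEndo]

lemma alphaL_fderiv (L : V × V → ℝ) (hL : ContDiff ℝ (⊤ : ℕ∞) L) (x u w : V × V) :
    fderiv ℝ (alphaL L) x u w = fderiv ℝ (fderiv ℝ L) x u (0, w.1) := by
  have hL' : ContDiff ℝ (⊤ : ℕ∞) (fderiv ℝ L) := hL.fderiv_right (by simp)
  set Ψ : ((V × V) →L[ℝ] ℝ) →L[ℝ] ((V × V) →L[ℝ] ℝ) :=
    (ContinuousLinearMap.compL ℝ (V × V) (V × V) ℝ).flip (vertEndo V) with hΨ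
  have hfun : alphaL L = fun y => Ψ (fderiv ℝ L y) := by
    funext y; ext v <;> simp [alphaL, hΨ, vertEndo]
  have h : HasFDerivAt (alphaL L) (Ψ.comp (fderiv ℝ (fderiv ℝ L) x)) x := by
    rw [hfun]
    exact Ψ.hasFDerivAt.comp x ((hL'.differentiable (by simp) x).hasFDerivAt)
  rw [h.fderiv]
  simp [hΨ, vertEndo]

lemma energyL_fderiv (L : V × V → ℝ) (hL : ContDiff ℝ (⊤ : ℕ∞) L) (x w : V × V) :
    fderiv ℝ (energyL L) x w =
      fderiv ℝ (fderiv ℝ L) x w (0, x.2) + fderiv ℝ L x (0, w.2) - fderiv ℝ L x w := by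
  have hL' : ContDiff ℝ (⊤ : ℕ∞) (fderiv ℝ L) := hL.fderiv_right (by simp)
  set D : (V × V) →L[ℝ] (V × V) :=
    (ContinuousLinearMap.inr ℝ V V).comp (ContinuousLinearMap.snd ℝ V V) with hD
  have hfun : energyL L = fun y => fderiv ℝ L y (D y) - L y := by
    funext y; simp [energyL, hD]
  have h1 : HasFDerivAt (fun y => fderiv ℝ L y (D y))
      ((fderiv ℝ L x).comp ((fderiv ℝ D x)) + (fderiv ℝ (fderiv ℝ L) x).flip (D x)) x :=
    ((hL'.differentiable (by simp) x).hasFDerivAt).clm_apply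
      (D.hasFDerivAt).differentiableAt.hasFDerivAt
  have h : HasFDerivAt (energyL L)
      ((fderiv ℝ L x).comp ((fderiv ℝ D x)) + (fderiv ℝ (fderiv ℝ L) x).flip (D x)
        - fderiv ℝ L x) x := by
    rw [hfun]
    exact h1.sub ((hL.differentiable (by simp) x).hasFDerivAt)
  rw [h.fderiv, D.fderiv]
  simp [hD]
  ring

end Aux

/-- For `ξ` in `𝔤_β` (here `Y = ξ_Q` is the infinitesimal generator, which
leaves `L` invariant, with `β(Y^c) = 0` and `ι_{Y^c} dβ = 0`), the vector
field `Y` is a Noether symmetry as well as a symmetry of the forced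
Lagrangian system; in particular `Y^c(E_L) = 0`, i.e. the energy is
invariant. -/
theorem gbeta_gives_noether_symmetry
    (L : V × V → ℝ) (hL : ContDiff ℝ (⊤ : ℕ∞) L) (hreg : RegularLag L)
    (β : V × V → (V × V) →L[ℝ] ℝ) (hβ : ContDiff ℝ (⊤ : ℕ∞) β) (hsb : SemibasicTQ β)
    (ξf : V × V → V × V) (hξf : IsForcedEL L β ξf) (hξfs : ContDiff ℝ (⊤ : ℕ∞) ξf)
    (Y : V → V) (hY : ContDiff ℝ (⊤ : ℕ∞) Y)
    -- L is invariant under the (lifted) flow of Y = ξ_Q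
    (hinv : ∀ x, fderiv ℝ L x (clift Y x) = 0)
    -- ξ ∈ 𝔤_β:
    (hβY : ∀ x, β x (clift Y x) = 0)
    (hdβY : ∀ x v, extDerivOne β x (clift Y x) v = 0) :
    -- Y is a Noether symmetry:
    (∀ x, fderiv ℝ (energyL L) x (clift Y x) + β x (clift Y x) = 0) ∧
    (∃ f : V × V → ℝ, ContDiff ℝ (⊤ : ℕ∞) f ∧
      ∀ x, lieDerivOne (clift Y) (alphaL L) x = fderiv ℝ f x) ∧
    -- Y is a symmetry of the forced Lagrangian system:
    (∀ x, fderiv ℝ L x (clift Y x) = β x (clift Y x)) ∧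
    -- the energy is invariant:
    (∀ x, fderiv ℝ (energyL L) x (clift Y x) = 0) := by
  have hL' : ContDiff ℝ (⊤ : ℕ∞) (fderiv ℝ L) := hL.fderiv_right (by simp)
  have hCdiff : Differentiable ℝ (clift Y) :=
    fun x => (clift_hasFDeriv Y hY x).differentiableAt
  have hsymm : ∀ (x a b : V × V),
      fderiv ℝ (fderiv ℝ L) x a b = fderiv ℝ (fderiv ℝ L) x b a := fun x a b =>
    second_derivative_symmetric (fun y => (hL.differentiable (by simp) y).hasFDerivAt)
      ((hL'.differentiable (by simp) x).hasFDerivAt) a b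
  have hE : ∀ x, fderiv ℝ (energyL L) x (clift Y x) = 0 := by
    intro x
    have hk := key_lemma L hL (clift Y) hCdiff hinv x (0, x.2)
    rw [clift_fderiv_vert Y hY x x.2] at hk
    rw [energyL_fderiv L hL x (clift Y x)]
    have hs := hsymm x (clift Y x) (0, x.2)
    have h0 := hinv x
    simp only [clift] at *
    linarith
  refine ⟨?_, ⟨fun _ => 0, contDiff_const, ?_⟩, ?_, hE⟩
  · intro x; rw [hE x, hβY x]; simp
  · intro x
    have hf0 : fderiv ℝ (fun _ : V × V => (0:ℝ)) x = 0 := fderiv_const_apply 0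
    rw [hf0]
    refine ContinuousLinearMap.ext fun w => ?_
    simp only [lieDerivOne, ContinuousLinearMap.add_apply, ContinuousLinearMap.coe_comp',
      Function.comp_apply, ContinuousLinearMap.zero_apply]
    rw [alphaL_fderiv L hL x (clift Y x) w, alphaL_apply,
      clift_fderiv_fst Y hY x w]
    have hk := key_lemma L hL (clift Y) hCdiff hinv x (0, w.1)
    rw [clift_fderiv_vert Y hY x w.1] at hk
    have hs := hsymm x (clift Y x) (0, w.1)
    linarith
  · intro x; rw [hinv x, hβY x]
end
end
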